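/- arXiv:2403.16693 — 3 statements merged into one kernel-verified Lean document; each statement's English description precedes it below -/
import Mathlib

section
/- Classical solutions versus viscosity solutions (Lemma 4.4): Let S₁⁺ = S₁(0,0) ∩ {z > 0}, T₁ = S₁(0,0) ∩ {z = 0}, let a^{ij} be bounded measurable symmetric uniformly elliptic coefficients, f ∈ C(T₁), F ∈ C(S₁⁺). If U ∈ C²(S₁⁺) ∩ C¹(closure of S₁⁺) satisfies pointwise a^{ij}(x)∂_{ij}U + z^{2−1/s}∂_{zz}U ≥ F in S₁⁺ and ∂_zU ≥ f on T₁ (respectively with ≤ in both), then U is a C_s-viscosity subsolution (respectively supersolution). Conversely, if U ∈ C²(S₁⁺) ∩ C¹(closure of S₁⁺) is a C_s-viscosity subsolution (respectively supersolution), then the pointwise inequalities a^{ij}(x)∂_{ij}U + z^{2−1/s}∂_{zz}U ≥ F in S₁⁺ and ∂_zU ≥ f on T₁ hold (respectively with ≤). -/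
open Set Filter Topology MeasureTheory
open scoped RealInnerProductSpace

noncomputable section

/-- ℝⁿ as Euclidean space. -/
abbrev Euc (n : ℕ) : Type := EuclideanSpace ℝ (Fin n)

/-- Points of ℝⁿ⁺¹ = ℝⁿ × ℝ. -/
abbrev Pt (n : ℕ) : Type := Euc n × ℝ

/-- `h(z) = s²/(1−s)·|z|^{1/s}`. -/
def hfun (s z : ℝ) : ℝ := s ^ 2 / (1 - s) * |z| ^ (1 / s)

/-- `h'(z) = s/(1−s)·z·|z|^{1/s−2}`. -/
def hder (s z : ℝ) : ℝ := s / (1 - s) * z * |z| ^ (1 / s - 2)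

/-- `h''(z) = |z|^{1/s−2}` (for `z ≠ 0`). -/
def hsec (s z : ℝ) : ℝ := |z| ^ (1 / s - 2)

/-- Monge–Ampère quasi-distance associated to `h`. -/
def deltaH (s z₀ z : ℝ) : ℝ := hfun s z - hfun s z₀ - hder s z₀ * (z - z₀)

/-- One-dimensional Monge–Ampère section of `h`. -/
def secH (s R z₀ : ℝ) : Set ℝ := {z | deltaH s z₀ z < R}

/-- `δ_φ(x₀,x) = |x−x₀|²/2`. -/
def deltaX {n : ℕ} (x₀ x : Euc n) : ℝ := ‖x - x₀‖ ^ 2 / 2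

/-- Section of `φ(x)=|x|²/2` : the euclidean ball of radius `√(2R)`. -/
def secX {n : ℕ} (R : ℝ) (x₀ : Euc n) : Set (Euc n) := {x | deltaX x₀ x < R}

/-- `δ_Φ = δ_φ + δ_h` on ℝⁿ⁺¹. -/
def deltaPhi {n : ℕ} (s : ℝ) (p q : Pt n) : ℝ := deltaX p.1 q.1 + deltaH s p.2 q.2

/-- Monge–Ampère section in ℝⁿ⁺¹. -/
def secPhi {n : ℕ} (s R : ℝ) (p : Pt n) : Set (Pt n) := {q | deltaPhi s p q < R}

/-- Monge–Ampère cube in ℝⁿ. -/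
def cubeX {n : ℕ} (R : ℝ) (x₀ : Euc n) : Set (Euc n) :=
  {x | ∀ i, |x i - x₀ i| < Real.sqrt (2 * R)}

/-- Monge–Ampère cube in ℝⁿ⁺¹. -/
def cubePhi {n : ℕ} (s R : ℝ) (p : Pt n) : Set (Pt n) := cubeX R p.1 ×ˢ secH s R p.2

/-- The measure `μ_h` on ℝ, with density `h''`. -/
def muH (s : ℝ) : Measure ℝ :=
  volume.withDensity fun z => ENNReal.ofReal (|z| ^ (1 / s - 2))

/-- The measure `μ_Φ` on ℝⁿ⁺¹, with density `h''(z)`. -/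
def muPhi (n : ℕ) (s : ℝ) : Measure (Pt n) :=
  (volume : Measure (Pt n)).withDensity fun p => ENNReal.ofReal (|p.2| ^ (1 / s - 2))

/-- Partial derivative `∂_z`. -/
def pZ {n : ℕ} (U : Pt n → ℝ) (p : Pt n) : ℝ := deriv (fun t => U (p.1, t)) p.2

/-- Partial derivative `∂_zz`. -/
def pZZ {n : ℕ} (U : Pt n → ℝ) (p : Pt n) : ℝ :=
  deriv (fun t => deriv (fun t' => U (p.1, t')) t) p.2

/-- `i`-th standard basis vector of ℝⁿ. -/
def basisVec {n : ℕ} (i : Fin n) : Euc n := EuclideanSpace.single i 1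

/-- Partial derivative `∂_i` in the `x` variables. -/
def pX {n : ℕ} (U : Pt n → ℝ) (p : Pt n) (i : Fin n) : ℝ :=
  fderiv ℝ (fun x => U (x, p.2)) p.1 (basisVec i)

/-- Second partial derivative `∂_{ij}` in the `x` variables. -/
def pXX {n : ℕ} (U : Pt n → ℝ) (p : Pt n) (i j : Fin n) : ℝ :=
  fderiv ℝ (fun x => pX U (x, p.2) j) p.1 (basisVec i)

/-- The extension operator `a^{ij}(x)∂_{ij}U + |z|^{2−1/s}∂_{zz}U`. -/
def AOp {n : ℕ} (s : ℝ) (a : Euc n → Fin n → Fin n → ℝ) (U : Pt n → ℝ) (p : Pt n) : ℝ :=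
  (∑ i, ∑ j, a p.1 i j * pXX U p i j) + |p.2| ^ (2 - 1 / s) * pZZ U p

/-- Identity coefficients (giving the Laplacian in `x`). -/
def idCoef (n : ℕ) : Euc n → Fin n → Fin n → ℝ := fun _ i j => if i = j then 1 else 0

/-- Symmetric, uniformly elliptic coefficients on `Ω`. -/
def IsElliptic {n : ℕ} (lam Lam : ℝ) (a : Euc n → Fin n → Fin n → ℝ) (Ω : Set (Euc n)) : Prop :=
  ∀ x ∈ Ω, (∀ i j, a x i j = a x j i) ∧
    ∀ ξ : Fin n → ℝ,
      lam * ∑ i, ξ i ^ 2 ≤ ∑ i, ∑ j, a x i j * ξ i * ξ j ∧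
      ∑ i, ∑ j, a x i j * ξ i * ξ j ≤ Lam * ∑ i, ξ i ^ 2

/-- `ψ` touches `U` from above at `p` within `D`. -/
def TouchAbove {n : ℕ} (ψ U : Pt n → ℝ) (D : Set (Pt n)) (p : Pt n) : Prop :=
  ψ p = U p ∧ ∃ E : Set (Pt n), IsOpen E ∧ Convex ℝ E ∧ p ∈ E ∧ ∀ q ∈ E ∩ D, U q ≤ ψ q

/-- `ψ` touches `U` from below at `p` within `D`. -/
def TouchBelow {n : ℕ} (ψ U : Pt n → ℝ) (D : Set (Pt n)) (p : Pt n) : Prop :=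
  ψ p = U p ∧ ∃ E : Set (Pt n), IsOpen E ∧ Convex ℝ E ∧ p ∈ E ∧ ∀ q ∈ E ∩ D, ψ q ≤ U q

/-- `f` admits a continuous extension to the closure of `D`. -/
def ExtCont {n : ℕ} (f : Pt n → ℝ) (D : Set (Pt n)) : Prop :=
  ∃ g : Pt n → ℝ, ContinuousOn g (closure D) ∧ EqOn f g D

/-- The test class `C_s` on an (open, upper) region `D`. -/
def MemCs {n : ℕ} (s : ℝ) (D : Set (Pt n)) (ψ : Pt n → ℝ) : Prop :=
  ContDiffOn ℝ 2 ψ D ∧ ExtCont ψ D ∧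
  (∀ i, ExtCont (fun p => pX ψ p i) D) ∧
  (∀ i j, ExtCont (fun p => pXX ψ p i j) D) ∧
  ExtCont (pZ ψ) D ∧
  ExtCont (fun p => |p.2| ^ (2 - 1 / s) * pZZ ψ p) D ∧
  ∀ p ∈ closure D, p.2 = 0 →
    ∃ L, HasDerivWithinAt (fun t => ψ (p.1, t)) L (Ici (0 : ℝ)) 0 ∧
      Tendsto (pZ ψ) (𝓝[D] p) (𝓝 L)

/-- `C_s`-viscosity subsolution of `a^{ij}∂_{ij}U + |z|^{2-1/s}∂_{zz}U = F` in `D`,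
`∂_z U = f` on the flat part `T ⊂ {z = 0}`. -/
def ViscSub {n : ℕ} (s : ℝ) (a : Euc n → Fin n → Fin n → ℝ) (F : Pt n → ℝ) (f : Euc n → ℝ)
    (D T : Set (Pt n)) (U : Pt n → ℝ) : Prop :=
  (∀ ψ : Pt n → ℝ, ContDiffOn ℝ 2 ψ D → ∀ p ∈ D, TouchAbove ψ U D p → F p ≤ AOp s a ψ p) ∧
  (∀ ψ : Pt n → ℝ, MemCs s (D ∩ {q : Pt n | 0 < q.2}) ψ → ∀ p ∈ T,
    TouchAbove ψ U ((D ∩ {q : Pt n | 0 < q.2}) ∪ T) p →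
    ∀ L, HasDerivWithinAt (fun t => ψ (p.1, t)) L (Ici (0 : ℝ)) 0 → f p.1 ≤ L)

/-- `C_s`-viscosity supersolution. -/
def ViscSuper {n : ℕ} (s : ℝ) (a : Euc n → Fin n → Fin n → ℝ) (F : Pt n → ℝ) (f : Euc n → ℝ)
    (D T : Set (Pt n)) (U : Pt n → ℝ) : Prop :=
  (∀ ψ : Pt n → ℝ, ContDiffOn ℝ 2 ψ D → ∀ p ∈ D, TouchBelow ψ U D p → AOp s a ψ p ≤ F p) ∧
  (∀ ψ : Pt n → ℝ, MemCs s (D ∩ {q : Pt n | 0 < q.2}) ψ → ∀ p ∈ T,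
    TouchBelow ψ U ((D ∩ {q : Pt n | 0 < q.2}) ∪ T) p →
    ∀ L, HasDerivWithinAt (fun t => ψ (p.1, t)) L (Ici (0 : ℝ)) 0 → L ≤ f p.1)

/-- `C_s`-viscosity solution. -/
def ViscSol {n : ℕ} (s : ℝ) (a : Euc n → Fin n → Fin n → ℝ) (F : Pt n → ℝ) (f : Euc n → ℝ)
    (D T : Set (Pt n)) (U : Pt n → ℝ) : Prop :=
  ViscSub s a F f D T U ∧ ViscSuper s a F f D T U

/-- `C_s`-viscosity solution of the reflected problem on a region `S` symmetric across `{z=0}`: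
the equation holds in `S ∩ {z ≠ 0}` and the Neumann condition on `S ∩ {z = 0}`. -/
def ViscSolRefl {n : ℕ} (s : ℝ) (a : Euc n → Fin n → Fin n → ℝ) (F : Pt n → ℝ) (f : Euc n → ℝ)
    (S : Set (Pt n)) (U : Pt n → ℝ) : Prop :=
  ViscSub s a F f (S ∩ {p : Pt n | p.2 ≠ 0}) (S ∩ {p : Pt n | p.2 = 0}) U ∧
  ViscSuper s a F f (S ∩ {p : Pt n | p.2 ≠ 0}) (S ∩ {p : Pt n | p.2 = 0}) U

/-- The upper half-cylinder `S_r(0) × (S_ρ(0))⁺ ⊂ ℝⁿ × ℝ`. -/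
def cylUp (n : ℕ) (s r ρ : ℝ) : Set (Pt n) := secX r (0 : Euc n) ×ˢ (secH s ρ 0 ∩ Ioi (0 : ℝ))

/-- The flat piece `T_r = S_r(0) × {0}`. -/
def Tflat (n : ℕ) (r : ℝ) : Set (Pt n) := secX r (0 : Euc n) ×ˢ ({0} : Set ℝ)

/-- Upper half of the unit section of `Φ` in ℝⁿ⁺¹. -/
def Dupper (n : ℕ) (s : ℝ) : Set (Pt n) :=
  secPhi s 1 ((0 : Euc n), (0 : ℝ)) ∩ {p : Pt n | 0 < p.2}

/-- Flat part of the unit section of `Φ`. -/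
def Tzero (n : ℕ) (s : ℝ) : Set (Pt n) :=
  secPhi s 1 ((0 : Euc n), (0 : ℝ)) ∩ {p : Pt n | p.2 = 0}

/-- Oscillation of `H` on `A`. -/
def oscOn {n : ℕ} (H : Pt n → ℝ) (A : Set (Pt n)) : ℝ := sSup (H '' A) - sInf (H '' A)

/-- Norm of the `k`-th derivative in the `x` variables. -/
def DxkNorm {n : ℕ} (k : ℕ) (H : Pt n → ℝ) (p : Pt n) : ℝ :=
  ‖iteratedFDeriv ℝ k (fun x => H (x, p.2)) p.1‖

/-- Classical solution of `Δ_x H + z^{2−1/s}∂_{zz}H = 0` in `D`, `∂_z H = 0` on `T`. -/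
def ClassicalHarm (n : ℕ) (s : ℝ) (D T : Set (Pt n)) (H : Pt n → ℝ) : Prop :=
  ContDiffOn ℝ 2 H D ∧ ContinuousOn H (D ∪ T) ∧
  (∀ p ∈ D, (∑ i, pXX H p i i) + |p.2| ^ (2 - 1 / s) * pZZ H p = 0) ∧
  (∀ p ∈ T, HasDerivWithinAt (fun t => H (p.1, t)) 0 (Ici (0 : ℝ)) 0)

/-- Contact set obtained by sliding Monge–Ampère paraboloids of opening `a` with vertices in
`B` from below until they touch the graph of `U` over `K`. -/
def contactSet {n : ℕ} (s a : ℝ) (U : Pt n → ℝ) (K B : Set (Pt n)) : Set (Pt n) :=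
  {p | p ∈ K ∧ ∃ v ∈ B, ∀ q ∈ K, U p + a * deltaPhi s v p ≤ U q + a * deltaPhi s v q}

/-!
Classical ⇒ viscosity: if `ψ` touches `U` from above at an interior point, `ψ - U` has a local
minimum there, so its `x`-Hessian is positive semidefinite and its second `z`-derivative is
nonnegative; by the Schur product theorem the pairing with the elliptic matrix `a` is nonnegative,
whence `Aψ ≥ AU ≥ F`. At a flat point `ψ - U ≥ 0` along the vertical half-line, so
`∂_z ψ ≥ ∂_z U ≥ f`.

Viscosity ⇒ classical: in the interior `U` is its own test function. At a flat point `(x₀, 0)`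
with `L = ∂_z U(x₀, 0)` and `ε > 0`, we have `∂_z U < L + ε` near `(x₀, 0)`, hence
`U(x, z) ≤ U(x, 0) + (L + ε) z` there. Sliding paraboloids `A + C|x - x₀|²` down onto `U(·, 0)`
produces contact points `x'` arbitrarily close to `x₀`, at which
`A + C|x - x₀|² + (L + ε) z` is a `C_s` test function touching `U` from above, so
`f(x') ≤ L + ε`; continuity of `f` concludes. Supersolutions reduce to subsolutions by negating
`U`, `F` and `f`.
-/

open Metric

section Calculus

variable {E F : Type*} [NormedAddCommGroup E] [NormedSpace ℝ E] [NormedAddCommGroup F]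
  [NormedSpace ℝ F]

theorem IsLocalMin.deriv_deriv_nonneg {g : ℝ → ℝ} {x : ℝ} (hmin : IsLocalMin g x)
    (hg : ContinuousAt g x) : 0 ≤ deriv (deriv g) x := by
  -- if `g'' x < 0`, the second-derivative test makes `x` a local maximum as well, so `g` is
  -- locally constant and `g'' x = 0`
  by_contra! hneg
  have hmax := isLocalMax_of_deriv_deriv_neg hneg hmin.deriv_eq_zero hg
  have hconst : g =ᶠ[𝓝 x] fun _ => g x := (hmin.and hmax).mono fun y hy => le_antisymm hy.2 hy.1
  have hderiv : deriv g =ᶠ[𝓝 x] fun _ => 0 := hconst.deriv.trans (by simp)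
  simp [hderiv.deriv_eq] at hneg

theorem IsLocalMin.fderiv_fderiv_apply_self_nonneg {g : E → ℝ} {x : E} (hmin : IsLocalMin g x)
    (hg : ContDiffAt ℝ 2 g x) (v : E) : 0 ≤ fderiv ℝ (fderiv ℝ g) x v v := by
  set L : ℝ → E := fun t => x + t • v
  have hL : ∀ t, HasDerivAt L v t := fun t =>
    (((hasDerivAt_id t).smul_const v).const_add x).congr_deriv (one_smul ℝ v)
  have hL0 : L 0 = x := by simp [L]
  have hLc : Tendsto L (𝓝 0) (𝓝 x) := hL0 ▸ (hL 0).continuousAt.tendsto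
  have hdiff : ∀ᶠ t in 𝓝 0, HasFDerivAt g (fderiv ℝ g (L t)) (L t) :=
    hLc.eventually ((hg.eventually (by simp)).mono fun y hy =>
      (hy.differentiableAt two_ne_zero).hasFDerivAt)
  have hfirst : deriv (g ∘ L) =ᶠ[𝓝 0] fun t => fderiv ℝ g (L t) v :=
    hdiff.mono fun t ht => (ht.comp_hasDerivAt t (hL t)).deriv
  have hsecond : HasDerivAt (fun t => fderiv ℝ g (L t) v) (fderiv ℝ (fderiv ℝ g) x v v) 0 := by
    have hD : HasFDerivAt (fderiv ℝ g) (fderiv ℝ (fderiv ℝ g) x) (L 0) := hL0 ▸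
      ((hg.fderiv_right (m := 1) le_rfl).differentiableAt one_ne_zero).hasFDerivAt
    exact (ContinuousLinearMap.apply ℝ ℝ v).hasFDerivAt.comp_hasDerivAt 0
      (hD.comp_hasDerivAt 0 (hL 0))
  have hminL : IsLocalMin (g ∘ L) 0 := (hL0 ▸ hmin).comp_continuous (hL 0).continuousAt
  have := hminL.deriv_deriv_nonneg (hL0 ▸ hg.continuousAt |>.comp (hL 0).continuousAt)
  rwa [hfirst.deriv_eq, hsecond.deriv] at this

theorem IsLocalMin.posSemidef_hessian {ι : Type*} [Fintype ι] {g : E → ℝ} {x : E}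
    (hmin : IsLocalMin g x) (hg : ContDiffAt ℝ 2 g x) (e : ι → E) :
    (Matrix.of fun i j => fderiv ℝ (fderiv ℝ g) x (e i) (e j)).PosSemidef := by
  refine .of_dotProduct_mulVec_nonneg ?_ fun ξ => ?_
  · ext i j
    exact (hg.isSymmSndFDerivAt (by simp)) (e j) (e i)
  · refine (hmin.fderiv_fderiv_apply_self_nonneg hg (∑ i, ξ i • e i)).trans_eq ?_
    simp only [map_sum, map_smul, sum_apply, smul_apply, smul_eq_mul, Finset.mul_sum, dotProduct,
      Pi.star_apply, star_trivial, Matrix.mulVec, Matrix.of_apply]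
    rw [Finset.sum_comm]
    exact Finset.sum_congr rfl fun _ _ => Finset.sum_congr rfl fun _ _ => by ring

theorem Matrix.PosSemidef.sum_sum_mul_nonneg {ι : Type*} [Fintype ι] {A B : Matrix ι ι ℝ}
    (hA : A.PosSemidef) (hB : B.PosSemidef) : 0 ≤ ∑ i, ∑ j, A i j * B i j := by
  simpa [dotProduct, Matrix.mulVec, Matrix.hadamard] using
    (hA.hadamard hB).dotProduct_mulVec_nonneg fun _ => 1

theorem fderiv_fderiv_sub_apply {f g : E → F} {x : E} (hf : ContDiffAt ℝ 2 f x)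
    (hg : ContDiffAt ℝ 2 g x) (u v : E) :
    fderiv ℝ (fderiv ℝ (f - g)) x u v =
      fderiv ℝ (fderiv ℝ f) x u v - fderiv ℝ (fderiv ℝ g) x u v := by
  simpa [iteratedFDeriv_two_apply] using
    congrArg (fun M => M ![u, v]) (iteratedFDeriv_sub_apply hf hg)

theorem deriv_deriv_sub {f g : ℝ → F} {x : ℝ} (hf : ContDiffAt ℝ 2 f x)
    (hg : ContDiffAt ℝ 2 g x) :
    deriv (deriv (f - g)) x = deriv (deriv f) x - deriv (deriv g) x := by
  simpa [iteratedDeriv_succ, iteratedDeriv_one] using iteratedDeriv_sub hf hg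

theorem IsLocalMinOn.hasDerivWithinAt_Ici_nonneg {g : ℝ → ℝ} {x d : ℝ}
    (hmin : IsLocalMinOn g (Ici x) x) (hg : HasDerivWithinAt g d (Ici x) x) : 0 ≤ d := by
  have h1 : (1 : ℝ) ∈ posTangentConeAt (Ici x) x :=
    mem_posTangentConeAt_of_segment_subset (by simp [segment_eq_Icc, Icc_subset_Ici_self])
  simpa using hmin.hasFDerivWithinAt_nonneg hg h1

end Calculus

theorem exists_dist_lt_isMaxOn_sub_mul_dist_sq {X : Type*} [PseudoMetricSpace X] [ProperSpace X]
    {W : X → ℝ} {c : X} {r δ : ℝ} (hr : 0 ≤ r) (hδ : 0 < δ)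
    (hW : ContinuousOn W (closedBall c r)) :
    ∃ C : ℝ, ∃ x' ∈ closedBall c r, dist x' c < δ ∧
      IsMaxOn (fun x => W x - C * dist x c ^ 2) (closedBall c r) x' := by
  have hc : c ∈ closedBall c r := mem_closedBall_self hr
  obtain ⟨xM, hxM, hWmax⟩ := (isCompact_closedBall c r).exists_isMaxOn ⟨c, hc⟩ hW
  have hM : W c ≤ W xM := hWmax hc
  obtain ⟨C, hC, hCpos⟩ : ∃ C : ℝ, C * δ ^ 2 = W xM - W c + δ ^ 2 ∧ 0 < C :=
    ⟨(W xM - W c) / δ ^ 2 + 1, by field_simp,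
      by have := div_nonneg (sub_nonneg.2 hM) (pow_pos hδ 2).le; linarith⟩
  obtain ⟨x', hx', hmax⟩ := (isCompact_closedBall c r).exists_isMaxOn ⟨c, hc⟩
    (hW.sub (by fun_prop : Continuous fun x => C * dist x c ^ 2).continuousOn)
  refine ⟨C, x', hx', ?_, hmax⟩
  -- comparing with the value at `c`: `C * dist x' c ^ 2 ≤ W xM - W c < C * δ ^ 2`
  have hcx' : W c ≤ W x' - C * dist x' c ^ 2 := by simpa using hmax hc
  have hx'M : W x' ≤ W xM := hWmax hx'
  have hlt : C * dist x' c ^ 2 < C * δ ^ 2 := by linarith [pow_pos hδ 2]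
  exact (pow_lt_pow_iff_left₀ dist_nonneg hδ.le two_ne_zero).1 (lt_of_mul_lt_mul_left hlt hCpos.le)

section Slices

variable {E F G : Type*} [NormedAddCommGroup E] [NormedSpace ℝ E] [NormedAddCommGroup F]
  [NormedSpace ℝ F] [NormedAddCommGroup G] [NormedSpace ℝ G] {k : WithTop ℕ∞} {f : E × F → G}
  {p : E × F}

theorem ContDiffAt.along_fst (hf : ContDiffAt ℝ k f p) :
    ContDiffAt ℝ k (fun x => f (x, p.2)) p.1 :=
  hf.comp p.1 (contDiffAt_id.prodMk contDiffAt_const)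

theorem ContDiffAt.along_snd (hf : ContDiffAt ℝ k f p) :
    ContDiffAt ℝ k (fun y => f (p.1, y)) p.2 :=
  hf.comp p.2 (contDiffAt_const.prodMk contDiffAt_id)

end Slices

section Operator

variable {n : ℕ} {s : ℝ} {a : Euc n → Fin n → Fin n → ℝ}

theorem pXX_eq_fderiv_fderiv {U : Pt n → ℝ} {p : Pt n}
    (hU : ContDiffAt ℝ 2 (fun x => U (x, p.2)) p.1) (i j : Fin n) :
    pXX U p i j = fderiv ℝ (fderiv ℝ fun x => U (x, p.2)) p.1 (basisVec i) (basisVec j) := by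
  have hD := (hU.fderiv_right (m := 1) le_rfl).differentiableAt one_ne_zero
  simp [pXX, pX, fderiv_clm_apply hD (differentiableAt_const _)]

theorem AOp_sub {ψ U : Pt n → ℝ} {p : Pt n} (hψ : ContDiffAt ℝ 2 ψ p)
    (hU : ContDiffAt ℝ 2 U p) : AOp s a (ψ - U) p = AOp s a ψ p - AOp s a U p := by
  have hx : ∀ i j, pXX (ψ - U) p i j = pXX ψ p i j - pXX U p i j := fun i j => by
    rw [pXX_eq_fderiv_fderiv (hψ.sub hU).along_fst, pXX_eq_fderiv_fderiv hψ.along_fst,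
      pXX_eq_fderiv_fderiv hU.along_fst]
    exact fderiv_fderiv_sub_apply hψ.along_fst hU.along_fst _ _
  have hz : pZZ (ψ - U) p = pZZ ψ p - pZZ U p := deriv_deriv_sub hψ.along_snd hU.along_snd
  simp only [AOp, hx, hz, mul_sub, Finset.sum_sub_distrib]
  ring

theorem AOp_nonneg_of_isLocalMin {w : Pt n → ℝ} {p : Pt n}
    (ha : (Matrix.of (a p.1)).PosSemidef) (hw : ContDiffAt ℝ 2 w p) (hmin : IsLocalMin w p) :
    0 ≤ AOp s a w p := by
  have hx : 0 ≤ ∑ i, ∑ j, a p.1 i j * pXX w p i j := by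
    simp only [pXX_eq_fderiv_fderiv hw.along_fst]
    exact ha.sum_sum_mul_nonneg ((hmin.comp_continuous (by fun_prop)).posSemidef_hessian
      hw.along_fst basisVec)
  have hz : 0 ≤ pZZ w p :=
    (hmin.comp_continuous (by fun_prop)).deriv_deriv_nonneg hw.along_snd.continuousAt
  exact add_nonneg hx (mul_nonneg (Real.rpow_nonneg (abs_nonneg _) _) hz)

theorem AOp_le_of_isLocalMin_sub {ψ U : Pt n → ℝ} {p : Pt n}
    (ha : (Matrix.of (a p.1)).PosSemidef) (hψ : ContDiffAt ℝ 2 ψ p) (hU : ContDiffAt ℝ 2 U p)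
    (hmin : IsLocalMin (ψ - U) p) : AOp s a U p ≤ AOp s a ψ p := by
  have h : 0 ≤ AOp s a (ψ - U) p := AOp_nonneg_of_isLocalMin ha (hψ.sub hU) hmin
  rw [AOp_sub hψ hU] at h
  linarith

end Operator

theorem IsElliptic.posSemidef {n : ℕ} {lam Lam : ℝ} {a : Euc n → Fin n → Fin n → ℝ}
    {Ω : Set (Euc n)} (ha : IsElliptic lam Lam a Ω) (hlam : 0 ≤ lam) {x : Euc n} (hx : x ∈ Ω) :
    (Matrix.of (a x)).PosSemidef := by
  refine .of_dotProduct_mulVec_nonneg (by ext i j; exact (ha x hx).1 j i) fun ξ => ?_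
  refine (mul_nonneg hlam (by positivity)).trans (((ha x hx).2 ξ).1.trans_eq ?_)
  simp only [dotProduct, Matrix.mulVec, Matrix.of_apply, Pi.star_apply, star_trivial,
    Finset.mul_sum]
  exact Finset.sum_congr rfl fun _ _ => Finset.sum_congr rfl fun _ _ => by ring

theorem TouchAbove.isLocalMinOn {n : ℕ} {ψ U : Pt n → ℝ} {D : Set (Pt n)} {p : Pt n}
    (h : TouchAbove ψ U D p) : IsLocalMinOn (ψ - U) D p := by
  obtain ⟨heq, E, hEo, -, hpE, hle⟩ := h
  filter_upwards [nhdsWithin_le_nhds (hEo.mem_nhds hpE), self_mem_nhdsWithin] with q hqE hqD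
  simp only [Pi.sub_apply, heq, sub_self, sub_nonneg]
  exact hle q ⟨hqE, hqD⟩

section Geometry

variable {n : ℕ} {s : ℝ}

theorem hfun_zero (hs : 0 < s) : hfun s 0 = 0 := by
  rw [hfun, abs_zero, Real.zero_rpow (one_div_pos.2 hs).ne', mul_zero]

theorem hfun_nonneg (hs : s < 1) (z : ℝ) : 0 ≤ hfun s z := by
  have : 0 < 1 - s := by linarith
  unfold hfun
  positivity

theorem continuous_hfun (hs : 0 < s) : Continuous (hfun s) :=
  continuous_const.mul ((Real.continuous_rpow_const (one_div_pos.2 hs).le).comp continuous_abs)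

theorem hfun_le_hfun (hs0 : 0 < s) (hs1 : s < 1) {t t' : ℝ} (ht : 0 ≤ t) (htt' : t ≤ t') :
    hfun s t ≤ hfun s t' := by
  have : 0 < 1 - s := by linarith
  unfold hfun
  gcongr

theorem deltaPhi_zero (hs : 0 < s) (q : Pt n) :
    deltaPhi s (0, 0) q = deltaX 0 q.1 + hfun s q.2 := by
  simp [deltaPhi, deltaH, hder, hfun_zero hs]

theorem isOpen_secPhi (hs : 0 < s) (R : ℝ) (p : Pt n) : IsOpen (secPhi s R p) := by
  have := continuous_hfun hs
  exact isOpen_lt (by unfold deltaPhi deltaX deltaH; fun_prop) continuous_const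

theorem isOpen_secX (R : ℝ) (x₀ : Euc n) : IsOpen (secX R x₀) := by
  unfold secX deltaX
  exact isOpen_lt (by fun_prop) continuous_const

theorem mem_Dupper_iff (hs : 0 < s) {q : Pt n} :
    q ∈ Dupper n s ↔ deltaX 0 q.1 + hfun s q.2 < 1 ∧ 0 < q.2 := by
  simp [Dupper, secPhi, ← deltaPhi_zero hs]

theorem mem_Tzero_iff (hs : 0 < s) {q : Pt n} : q ∈ Tzero n s ↔ q.1 ∈ secX 1 0 ∧ q.2 = 0 := by
  simp +contextual [Tzero, secPhi, secX, deltaPhi_zero hs, hfun_zero hs]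

theorem isOpen_Dupper (hs : 0 < s) : IsOpen (Dupper n s) :=
  (isOpen_secPhi hs 1 _).inter (isOpen_lt continuous_const continuous_snd)

theorem Dupper_inter_pos : Dupper n s ∩ {q | 0 < q.2} = Dupper n s :=
  inter_eq_left.2 fun _ hq => hq.2

theorem Dupper_union_Tzero : Dupper n s ∪ Tzero n s = secPhi s 1 (0, 0) ∩ {q | 0 ≤ q.2} := by
  ext q
  simp only [Dupper, Tzero, ← inter_union_distrib_left, mem_inter_iff, mem_union, mem_ofPred_eq,
    le_iff_lt_or_eq, eq_comm]

theorem mem_secX_of_mem_secPhi (hs0 : 0 < s) (hs1 : s < 1) {q : Pt n}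
    (hq : q ∈ secPhi s 1 (0, 0)) : q.1 ∈ secX 1 0 := by
  have := hfun_nonneg hs1 q.2
  simp only [secPhi, secX, mem_ofPred_eq, deltaPhi_zero hs0] at hq ⊢
  linarith

theorem mk_zero_mem_Tzero (hs0 : 0 < s) (hs1 : s < 1) {x : Euc n} {z : ℝ}
    (h : (x, z) ∈ Dupper n s) : ((x, 0) : Pt n) ∈ Tzero n s :=
  (mem_Tzero_iff hs0).2 ⟨mem_secX_of_mem_secPhi (q := (x, z)) hs0 hs1 h.1, rfl⟩

theorem mk_mem_Dupper_of_le (hs0 : 0 < s) (hs1 : s < 1) {x : Euc n} {z t : ℝ}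
    (h : (x, z) ∈ Dupper n s) (ht : 0 < t) (htz : t ≤ z) : ((x, t) : Pt n) ∈ Dupper n s := by
  rw [mem_Dupper_iff hs0] at h ⊢
  exact ⟨by linarith [hfun_le_hfun hs0 hs1 ht.le htz], ht⟩

theorem tendsto_mk_nhdsWithin_Dupper_union_Tzero (hs : 0 < s) {p : Pt n} (hp : p ∈ Tzero n s) :
    Tendsto (fun t => ((p.1, t) : Pt n)) (𝓝[≥] 0) (𝓝[Dupper n s ∪ Tzero n s] p) := by
  obtain ⟨x, z⟩ := p
  obtain rfl : z = 0 := hp.2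
  have hcont : Tendsto (fun t => ((x, t) : Pt n)) (𝓝 0) (𝓝 (x, 0)) :=
    (Continuous.prodMk_right x).tendsto 0
  refine tendsto_nhdsWithin_iff.2 ⟨hcont.mono_left nhdsWithin_le_nhds, ?_⟩
  rw [Dupper_union_Tzero]
  filter_upwards [nhdsWithin_le_nhds (hcont.eventually ((isOpen_secPhi hs 1 _).mem_nhds hp.1)),
    self_mem_nhdsWithin] with t h1 h2 using ⟨h1, h2⟩

theorem dist_mk_le_dist_mk {x x₀ : Euc n} {t z : ℝ} (ht : 0 ≤ t) (htz : t ≤ z) :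
    dist ((x, t) : Pt n) (x₀, 0) ≤ dist ((x, z) : Pt n) (x₀, 0) := by
  simp only [Prod.dist_eq, Real.dist_eq, sub_zero, abs_of_nonneg ht, abs_of_nonneg (ht.trans htz)]
  exact max_le_max le_rfl htz

theorem Tzero_subset_closure_Dupper (hs : 0 < s) : Tzero n s ⊆ closure (Dupper n s) := by
  intro p hp
  have h := (tendsto_mk_nhdsWithin_Dupper_union_Tzero hs hp).mono_left
    (nhdsWithin_mono _ Ioi_subset_Ici_self)
  refine mem_closure_of_tendsto (h.mono_right nhdsWithin_le_nhds) ?_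
  filter_upwards [h.eventually self_mem_nhdsWithin, self_mem_nhdsWithin] with t ht ht0
  exact ht.resolve_right fun hT => (ne_of_gt ht0) hT.2

end Geometry

def IsClassicalSub {n : ℕ} (s : ℝ) (a : Euc n → Fin n → Fin n → ℝ) (F : Pt n → ℝ) (f : Euc n → ℝ)
    (D T : Set (Pt n)) (U : Pt n → ℝ) : Prop :=
  (∀ p ∈ D, F p ≤ AOp s a U p) ∧
    ∀ p ∈ T, ∀ L : ℝ, HasDerivWithinAt (fun t => U (p.1, t)) L (Ici 0) 0 → f p.1 ≤ L

def IsClassicalSuper {n : ℕ} (s : ℝ) (a : Euc n → Fin n → Fin n → ℝ) (F : Pt n → ℝ) (f : Euc n → ℝ)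
    (D T : Set (Pt n)) (U : Pt n → ℝ) : Prop :=
  (∀ p ∈ D, AOp s a U p ≤ F p) ∧
    ∀ p ∈ T, ∀ L : ℝ, HasDerivWithinAt (fun t => U (p.1, t)) L (Ici 0) 0 → L ≤ f p.1

section Solutions

variable {n : ℕ} {s : ℝ} {a : Euc n → Fin n → Fin n → ℝ} {F : Pt n → ℝ} {f : Euc n → ℝ}
  {U : Pt n → ℝ}

theorem le_add_mul_of_pZ_le (hs0 : 0 < s) (hs1 : s < 1)
    (hU2 : ContDiffOn ℝ 2 U (Dupper n s)) (hU1 : ContinuousOn U (closure (Dupper n s)))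
    {x : Euc n} {z M : ℝ} (hxz : (x, z) ∈ Dupper n s) (hM : ∀ t ∈ Ioo 0 z, pZ U (x, t) ≤ M) :
    U (x, z) ≤ U (x, 0) + M * z := by
  have hseg : ∀ t ∈ Ioc 0 z, ((x, t) : Pt n) ∈ Dupper n s := fun t ht =>
    mk_mem_Dupper_of_le hs0 hs1 hxz ht.1 ht.2
  have hcont : ContinuousOn (fun t => U (x, t)) (Icc 0 z) := by
    refine hU1.comp (Continuous.prodMk_right x).continuousOn fun t ht => ?_
    rcases ht.1.eq_or_lt with rfl | ht0
    · exact Tzero_subset_closure_Dupper hs0 (mk_zero_mem_Tzero hs0 hs1 hxz)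
    · exact subset_closure (hseg t ⟨ht0, ht.2⟩)
  have hdiff : DifferentiableOn ℝ (fun t => U (x, t)) (interior (Icc 0 z)) := by
    rw [interior_Icc]
    intro t ht
    have hU : ContDiffAt ℝ 2 U (x, t) :=
      hU2.contDiffAt ((isOpen_Dupper hs0).mem_nhds (hseg t (Ioo_subset_Ioc_self ht)))
    exact (hU.along_snd.differentiableAt two_ne_zero).differentiableWithinAt
  have hz : 0 ≤ z := ((mem_Dupper_iff hs0).1 hxz).2.le
  have := (convex_Icc 0 z).image_sub_le_mul_sub_of_deriv_le hcont hdiff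
    (fun t ht => hM t (by rwa [interior_Icc] at ht)) 0 (left_mem_Icc.2 hz) z
    (right_mem_Icc.2 hz) hz
  linarith

theorem memCs_add_mul_snd {φ : Euc n → ℝ} (hφ : ContDiff ℝ 2 φ) (B : ℝ) (D : Set (Pt n)) :
    MemCs s D (fun q => φ q.1 + B * q.2) := by
  have hz : ∀ x t, HasDerivAt (fun t => φ x + B * t) B t := fun x t => by
    simpa using ((hasDerivAt_id t).const_mul B).const_add (φ x)
  have hpZ : ∀ q, pZ (fun q => φ q.1 + B * q.2) q = B := fun q => (hz q.1 q.2).deriv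
  have hpX : ∀ q i, pX (fun q => φ q.1 + B * q.2) q i = fderiv ℝ φ q.1 (basisVec i) := by
    simp [pX]
  have hpXX : ∀ q i j, pXX (fun q => φ q.1 + B * q.2) q i j =
      fderiv ℝ (fun x => fderiv ℝ φ x (basisVec j)) q.1 (basisVec i) := by
    simp only [pXX, hpX, implies_true]
  have hφ1 : ∀ j, ContDiff ℝ 1 fun x => fderiv ℝ φ x (basisVec j) := fun j =>
    (hφ.fderiv_right le_rfl).clm_apply contDiff_const
  have hφc := hφ.continuous
  refine ⟨(by fun_prop : ContDiff ℝ 2 _).contDiffOn, ⟨_, by fun_prop, fun _ _ => rfl⟩,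
    fun i => ⟨_, ?_, fun q _ => hpX q i⟩, fun i j => ⟨_, ?_, fun q _ => hpXX q i j⟩,
    ⟨fun _ => B, continuousOn_const, fun q _ => hpZ q⟩,
    ⟨fun _ => 0, continuousOn_const, fun q _ => ?_⟩,
    fun q _ _ => ⟨B, (hz q.1 0).hasDerivWithinAt, ?_⟩⟩
  · exact ((hφ.continuous_fderiv two_ne_zero).comp continuous_fst).clm_apply continuous_const
      |>.continuousOn
  · exact (((hφ1 j).continuous_fderiv one_ne_zero).comp continuous_fst).clm_apply
      continuous_const |>.continuousOn
  · simp [pZZ, (hz _ _).deriv]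
  · exact tendsto_const_nhds.congr fun q => (hpZ q).symm

theorem ViscSub.exists_le_near (hs0 : 0 < s) (hs1 : s < 1)
    (hU2 : ContDiffOn ℝ 2 U (Dupper n s)) (hU1 : ContinuousOn U (closure (Dupper n s)))
    (hv : ViscSub s a F f (Dupper n s) (Tzero n s) U) {p : Pt n} (hp : p ∈ Tzero n s)
    {r M : ℝ} (hr : 0 < r) (hball : closedBall p.1 r ⊆ secX 1 0)
    (hM : ∀ q ∈ Dupper n s, dist q p < r → pZ U q ≤ M) {δ : ℝ} (hδ : 0 < δ) :
    ∃ x ∈ ball p.1 δ ∩ secX 1 0, f x ≤ M := by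
  obtain ⟨x₀, z₀⟩ := p
  obtain rfl : z₀ = 0 := hp.2
  have hT : ∀ x ∈ closedBall x₀ r, ((x, 0) : Pt n) ∈ Tzero n s := fun x hx =>
    (mem_Tzero_iff hs0).2 ⟨hball hx, rfl⟩
  have hW : ContinuousOn (fun x => U (x, 0)) (closedBall x₀ r) :=
    hU1.comp (Continuous.prodMk_left 0).continuousOn fun x hx =>
      Tzero_subset_closure_Dupper hs0 (hT x hx)
  obtain ⟨C, x', hx'r, hx'δ, hmax⟩ :=
    exists_dist_lt_isMaxOn_sub_mul_dist_sq hr.le (lt_min hδ hr) hW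
  -- `ψ` is the paraboloid touching `U(·, 0)` from above at `x'`, tilted by slope `M` in `z`
  set φ : Euc n → ℝ := fun x => U (x', 0) - C * dist x' x₀ ^ 2 + C * ‖x - x₀‖ ^ 2
  have hφ : ContDiff ℝ 2 φ := contDiff_const.add
    (contDiff_const.mul ((contDiff_norm_sq ℝ).comp (contDiff_id.sub contDiff_const)))
  set ψ : Pt n → ℝ := fun q => φ q.1 + M * q.2
  have htouch : TouchAbove ψ U ((Dupper n s ∩ {q | 0 < q.2}) ∪ Tzero n s) (x', 0) := by
    refine ⟨by simp [ψ, φ, dist_eq_norm], ball (x₀, 0) r, isOpen_ball, convex_ball _ _, ?_, ?_⟩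
    · simpa [Prod.dist_eq, hr] using (lt_min_iff.1 hx'δ).2
    rintro ⟨x, z⟩ ⟨hq, hqD | hqT⟩
    all_goals
      have hx : x ∈ closedBall x₀ r := (le_max_left _ _).trans (mem_ball.1 hq).le
      have hpar : U (x, 0) - C * dist x x₀ ^ 2 ≤ U (x', 0) - C * dist x' x₀ ^ 2 := hmax hx
      simp only [ψ, φ, ← dist_eq_norm]
    · have hvert := le_add_mul_of_pZ_le hs0 hs1 hU2 hU1 hqD.1 fun t ht =>
        hM _ (mk_mem_Dupper_of_le hs0 hs1 hqD.1 ht.1 ht.2.le)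
          ((dist_mk_le_dist_mk (x := x) (x₀ := x₀) ht.1.le ht.2.le).trans_lt hq)
      linarith
    · obtain rfl : z = 0 := hqT.2
      linarith
  refine ⟨x', ⟨(lt_min_iff.1 hx'δ).1, hball hx'r⟩, hv.2 ψ (memCs_add_mul_snd hφ M _) (x', 0)
    (hT x' hx'r) htouch M ?_⟩
  exact (((hasDerivAt_id 0).const_mul M).const_add (φ x')).hasDerivWithinAt.congr_deriv (mul_one M)

theorem ViscSub.le_of_tendsto_pZ (hs0 : 0 < s) (hs1 : s < 1)
    (hU2 : ContDiffOn ℝ 2 U (Dupper n s)) (hU1 : ContinuousOn U (closure (Dupper n s)))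
    (hf : ContinuousOn f (secX 1 0)) (hv : ViscSub s a F f (Dupper n s) (Tzero n s) U)
    {p : Pt n} (hp : p ∈ Tzero n s) {L : ℝ} (hL : Tendsto (pZ U) (𝓝[Dupper n s] p) (𝓝 L)) :
    f p.1 ≤ L := by
  have hp1 : p.1 ∈ secX 1 0 := ((mem_Tzero_iff hs0).1 hp).1
  refine le_of_forall_pos_le_add fun ε hε => ?_
  obtain ⟨ρ, hρ, hρM⟩ := nhdsWithin_basis_ball.eventually_iff.1
    (hL.eventually (eventually_le_nhds (lt_add_of_pos_right L hε)))
  obtain ⟨r, hr, hrsub⟩ := isOpen_iff.1 (isOpen_secX 1 0) p.1 hp1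
  have hfreq : ∃ᶠ x in 𝓝[secX 1 0] p.1, f x ≤ L + ε := by
    refine nhdsWithin_basis_ball.frequently_iff.2 fun δ hδ => ?_
    refine hv.exists_le_near hs0 hs1 hU2 hU1 hp (r := min ρ r / 2) (by positivity)
      ((closedBall_subset_ball ?_).trans hrsub) (fun q hq hqp => hρM ⟨?_, hq⟩) hδ
    · linarith [min_le_right ρ r]
    · exact mem_ball.2 (hqp.trans_le (by linarith [min_le_left ρ r]))
  exact isClosed_Iic.mem_of_frequently_of_tendsto hfreq (hf p.1 hp1)

theorem IsClassicalSub.viscSub {lam Lam : ℝ} (hs0 : 0 < s) (hs1 : s < 1) (hlam : 0 ≤ lam)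
    (ha : IsElliptic lam Lam a (secX 1 0)) (hU2 : ContDiffOn ℝ 2 U (Dupper n s))
    (hUz : ∀ p ∈ Tzero n s, ∃ L, HasDerivWithinAt (fun t => U (p.1, t)) L (Ici 0) 0)
    (hc : IsClassicalSub s a F f (Dupper n s) (Tzero n s) U) :
    ViscSub s a F f (Dupper n s) (Tzero n s) U := by
  refine ⟨fun ψ hψ p hp htouch => ?_, fun ψ _ p hp htouch L hL => ?_⟩
  · have hnhds := (isOpen_Dupper hs0).mem_nhds hp
    exact (hc.1 p hp).trans (AOp_le_of_isLocalMin_sub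
      (ha.posSemidef hlam (mem_secX_of_mem_secPhi hs0 hs1 hp.1)) (hψ.contDiffAt hnhds)
      (hU2.contDiffAt hnhds) (htouch.isLocalMinOn.isLocalMin hnhds))
  · obtain ⟨L₀, hL₀⟩ := hUz p hp
    rw [Dupper_inter_pos] at htouch
    obtain ⟨x, z⟩ := p
    obtain rfl : z = 0 := hp.2
    have hmin : IsLocalMinOn (fun t => ψ (x, t) - U (x, t)) (Ici 0) 0 :=
      htouch.isLocalMinOn.comp_tendsto (tendsto_mk_nhdsWithin_Dupper_union_Tzero hs0 hp)
    linarith [hmin.hasDerivWithinAt_Ici_nonneg (hL.sub hL₀), hc.2 _ hp L₀ hL₀]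

theorem ViscSub.isClassicalSub (hs0 : 0 < s) (hs1 : s < 1)
    (hU2 : ContDiffOn ℝ 2 U (Dupper n s)) (hU1 : ContinuousOn U (closure (Dupper n s)))
    (hf : ContinuousOn f (secX 1 0))
    (hUz : ∀ p ∈ Tzero n s, ∃ L, HasDerivWithinAt (fun t => U (p.1, t)) L (Ici 0) 0 ∧
      Tendsto (pZ U) (𝓝[Dupper n s] p) (𝓝 L))
    (hv : ViscSub s a F f (Dupper n s) (Tzero n s) U) :
    IsClassicalSub s a F f (Dupper n s) (Tzero n s) U := by
  refine ⟨fun p hp => hv.1 U hU2 p hp ⟨rfl, univ, isOpen_univ, convex_univ, mem_univ _,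
    fun _ _ => le_rfl⟩, fun p hp L hL => ?_⟩
  obtain ⟨L₀, hL₀, hlim⟩ := hUz p hp
  rw [(uniqueDiffOn_Ici 0 0 self_mem_Ici).eq_deriv _ hL hL₀]
  exact hv.le_of_tendsto_pZ hs0 hs1 hU2 hU1 hf hp hlim

theorem isClassicalSub_iff_viscSub {lam Lam : ℝ} (hs0 : 0 < s) (hs1 : s < 1) (hlam : 0 ≤ lam)
    (ha : IsElliptic lam Lam a (secX 1 0)) (hf : ContinuousOn f (secX 1 0))
    (hU2 : ContDiffOn ℝ 2 U (Dupper n s)) (hU1 : ContinuousOn U (closure (Dupper n s)))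
    (hUz : ∀ p ∈ Tzero n s, ∃ L, HasDerivWithinAt (fun t => U (p.1, t)) L (Ici 0) 0 ∧
      Tendsto (pZ U) (𝓝[Dupper n s] p) (𝓝 L)) :
    IsClassicalSub s a F f (Dupper n s) (Tzero n s) U ↔
      ViscSub s a F f (Dupper n s) (Tzero n s) U :=
  ⟨fun hc => hc.viscSub hs0 hs1 hlam ha hU2 fun p hp => (hUz p hp).imp fun _ h => h.1,
    fun hv => hv.isClassicalSub hs0 hs1 hU2 hU1 hf hUz⟩

end Solutions

section Negation

variable {n : ℕ} {s : ℝ} {a : Euc n → Fin n → Fin n → ℝ} {F : Pt n → ℝ} {f : Euc n → ℝ}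
  {U : Pt n → ℝ} {D T : Set (Pt n)}

theorem pX_neg (p : Pt n) (i : Fin n) : pX (-U) p i = -pX U p i := by
  simp [pX]

theorem pXX_neg (p : Pt n) (i j : Fin n) : pXX (-U) p i j = -pXX U p i j := by
  simp [pXX, pX]

theorem pZ_neg (p : Pt n) : pZ (-U) p = -pZ U p := by
  simp [pZ]

theorem pZZ_neg (p : Pt n) : pZZ (-U) p = -pZZ U p := by
  simp [pZZ]

theorem AOp_neg (p : Pt n) : AOp s a (-U) p = -AOp s a U p := by
  simp only [AOp, pXX_neg, pZZ_neg, mul_neg, Finset.sum_neg_distrib]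
  ring

theorem ExtCont.neg {g : Pt n → ℝ} (h : ExtCont g D) : ExtCont (fun q => -g q) D := by
  obtain ⟨G, hG, hgG⟩ := h
  exact ⟨-G, hG.neg, fun q hq => by simp [hgG hq]⟩

theorem MemCs.neg {ψ : Pt n → ℝ} (h : MemCs s D ψ) : MemCs s D (-ψ) := by
  obtain ⟨h1, h2, h3, h4, h5, h6, h7⟩ := h
  refine ⟨h1.neg, h2.neg, fun i => ?_, fun i j => ?_, ?_, ?_, fun p hp hp2 => ?_⟩
  · simpa [pX_neg] using (h3 i).neg
  · simpa [pXX_neg] using (h4 i j).neg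
  · simpa [funext pZ_neg] using h5.neg
  · simpa [pZZ_neg] using h6.neg
  · obtain ⟨L, hL, hlim⟩ := h7 p hp hp2
    exact ⟨-L, hL.neg, by simpa [funext pZ_neg] using hlim.neg⟩

theorem touchAbove_neg_iff {ψ : Pt n → ℝ} {p : Pt n} :
    TouchAbove (-ψ) (-U) D p ↔ TouchBelow ψ U D p := by
  simp [TouchAbove, TouchBelow]

theorem viscSuper_iff_viscSub_neg :
    ViscSuper s a F f D T U ↔ ViscSub s a (-F) (-f) D T (-U) := by
  constructor
  · rintro ⟨h1, h2⟩
    refine ⟨fun ψ hψ p hp ht => ?_, fun ψ hψ p hp ht L hL => ?_⟩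
    · have := h1 (-ψ) hψ.neg p hp (by rwa [← touchAbove_neg_iff, neg_neg])
      simp only [AOp_neg, Pi.neg_apply] at this ⊢
      linarith
    · have := h2 (-ψ) hψ.neg p hp (by rwa [← touchAbove_neg_iff, neg_neg]) (-L) hL.neg
      simp only [Pi.neg_apply]
      linarith
  · rintro ⟨h1, h2⟩
    refine ⟨fun ψ hψ p hp ht => ?_, fun ψ hψ p hp ht L hL => ?_⟩
    · have := h1 (-ψ) hψ.neg p hp (touchAbove_neg_iff.2 ht)
      simp only [AOp_neg, Pi.neg_apply] at this
      linarith
    · have := h2 (-ψ) hψ.neg p hp (touchAbove_neg_iff.2 ht) (-L) hL.neg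
      simp only [Pi.neg_apply] at this
      linarith

theorem isClassicalSuper_iff_isClassicalSub_neg :
    IsClassicalSuper s a F f D T U ↔ IsClassicalSub s a (-F) (-f) D T (-U) := by
  refine and_congr (by simp [AOp_neg])
    (forall₂_congr fun p _ => ⟨fun h L hL => ?_, fun h L hL => ?_⟩)
  · have := h (-L) (by simpa [Pi.neg_def] using hL.neg)
    simp only [Pi.neg_apply]
    linarith
  · have := h (-L) hL.neg
    simp only [Pi.neg_apply] at this
    linarith

end Negation

theorem classical_iff_viscosity_general (n : ℕ) (s lam Lam : ℝ)
    (hs0 : 0 < s) (hs1 : s < 1) (hlam : 0 < lam)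
    (a : Euc n → Fin n → Fin n → ℝ) (f : Euc n → ℝ) (F : Pt n → ℝ) (U : Pt n → ℝ)
    (ha : IsElliptic lam Lam a (secX 1 (0 : Euc n)))
    (hf : ContinuousOn f (secX 1 (0 : Euc n)))
    (hU2 : ContDiffOn ℝ 2 U (Dupper n s))
    (hU1 : ContinuousOn U (closure (Dupper n s)))
    (hUz : ∀ p ∈ Tzero n s,
      ∃ L : ℝ, HasDerivWithinAt (fun t => U (p.1, t)) L (Ici (0 : ℝ)) 0 ∧
        Tendsto (pZ U) (𝓝[Dupper n s] p) (𝓝 L)) :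
    (((∀ p ∈ Dupper n s, F p ≤ AOp s a U p) ∧
      (∀ p ∈ Tzero n s, ∀ L : ℝ,
        HasDerivWithinAt (fun t => U (p.1, t)) L (Ici (0 : ℝ)) 0 → f p.1 ≤ L))
      ↔ ViscSub s a F f (Dupper n s) (Tzero n s) U) ∧
    (((∀ p ∈ Dupper n s, AOp s a U p ≤ F p) ∧
      (∀ p ∈ Tzero n s, ∀ L : ℝ,
        HasDerivWithinAt (fun t => U (p.1, t)) L (Ici (0 : ℝ)) 0 → L ≤ f p.1))
      ↔ ViscSuper s a F f (Dupper n s) (Tzero n s) U) := by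
  have hUz_neg : ∀ p ∈ Tzero n s, ∃ L, HasDerivWithinAt (fun t => (-U) (p.1, t)) L (Ici 0) 0 ∧
      Tendsto (pZ (-U)) (𝓝[Dupper n s] p) (𝓝 L) := fun p hp => by
    obtain ⟨L, hL, hlim⟩ := hUz p hp
    exact ⟨-L, hL.neg, by simpa [funext pZ_neg] using hlim.neg⟩
  refine ⟨isClassicalSub_iff_viscSub hs0 hs1 hlam.le ha hf hU2 hU1 hUz, ?_⟩
  rw [viscSuper_iff_viscSub_neg, ← isClassicalSub_iff_viscSub (F := -F) (f := -f) (U := -U)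
    hs0 hs1 hlam.le ha hf.neg hU2.neg hU1.neg hUz_neg]
  exact isClassicalSuper_iff_isClassicalSub_neg

/-- **Lemma 4.4: classical (sub/super)solutions coincide with `C_s`-viscosity
(sub/super)solutions** among functions that are `C²` in the interior and `C¹` up to `{z=0}`. -/
theorem classical_iff_viscosity (n : ℕ) (hn : 1 ≤ n) (s lam Lam : ℝ)
    (hs0 : 0 < s) (hs1 : s < 1) (hlam : 0 < lam) (hLam : lam ≤ Lam)
    (a : Euc n → Fin n → Fin n → ℝ) (f : Euc n → ℝ) (F : Pt n → ℝ) (U : Pt n → ℝ)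
    (ha : IsElliptic lam Lam a (secX 1 (0 : Euc n)))
    (hf : ContinuousOn f (secX 1 (0 : Euc n)))
    (hF : ContinuousOn F (Dupper n s))
    (hU2 : ContDiffOn ℝ 2 U (Dupper n s))
    (hU1 : ContinuousOn U (closure (Dupper n s)))
    (hUz : ∀ p ∈ Tzero n s,
      ∃ L : ℝ, HasDerivWithinAt (fun t => U (p.1, t)) L (Ici (0 : ℝ)) 0 ∧
        Tendsto (pZ U) (𝓝[Dupper n s] p) (𝓝 L)) :
    (((∀ p ∈ Dupper n s, F p ≤ AOp s a U p) ∧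
      (∀ p ∈ Tzero n s, ∀ L : ℝ,
        HasDerivWithinAt (fun t => U (p.1, t)) L (Ici (0 : ℝ)) 0 → f p.1 ≤ L))
      ↔ ViscSub s a F f (Dupper n s) (Tzero n s) U) ∧
    (((∀ p ∈ Dupper n s, AOp s a U p ≤ F p) ∧
      (∀ p ∈ Tzero n s, ∀ L : ℝ,
        HasDerivWithinAt (fun t => U (p.1, t)) L (Ici (0 : ℝ)) 0 → L ≤ f p.1))
      ↔ ViscSuper s a F f (Dupper n s) (Tzero n s) U) :=
  classical_iff_viscosity_general n s lam Lam hs0 hs1 hlam a f F U ha hf hU2 hU1 hUz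
end
end

section
/- A∞-type absolute continuity of the Monge–Ampère measure μ_h on sections (Lemma 3.2): For every 0 < ε < 1 there exists 0 < ε₀ < 1, depending only on ε and on 0 < s < 1, such that for every section S_R(z) ⊂ ℝ and every Lebesgue-measurable set E ⊂ S_R(z), if |E|/|S_R(z)| < ε₀ then μ_h(E)/μ_h(S_R(z)) < ε, where |·| denotes Lebesgue measure. -/
open Set Filter Topology MeasureTheory
open scoped RealInnerProductSpace

noncomputable section

/-!
The density `|z|^α` of `μ_h`, `α = 1/s - 2 > -1`, is an `A∞` weight on intervals, and every
section of `h` is a bounded open interval because `h` is convex and superlinear. Let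
`I = (a, b)`, `L = b - a`, `M = max |a| |b|`, and `|E| ≤ t L`. If `α ≥ 0`, the weight is at most
`M^α` on `I` and at least `(M/5)^α` on the half of `I` outside `(-L/4, L/4)`, so
`μ(E) ≤ 2·5^α t μ(I)`. If `α < 0`, the weight is at least `M^α` on `I`. When `I` is far from the
origin (`2L ≤ M`) it varies on `I` by a factor at most `2^(-α)`; otherwise `M ≤ 2L`, and splitting
`E` along `(-r, r)`, `r = t L`, gives `μ(E) ≤ μ(-r, r) + r^α |E| = O(r^(α+1)) = O(t^(α+1)) μ(I)`.
-/

lemma max_abs_le_abs_add_of_mem_Icc {a b z : ℝ} (hz : z ∈ Icc a b) :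
    max |a| |b| ≤ |z| + (b - a) :=
  max_le
    (by linarith [abs_sub_abs_le_abs_sub a z, abs_sub_comm a z,
      abs_of_nonneg (sub_nonneg.2 hz.1), hz.2])
    (by linarith [abs_sub_abs_le_abs_sub b z, abs_of_nonneg (sub_nonneg.2 hz.2), hz.1])

lemma le_ofReal_mul_of_le_ofReal_mul {x y : ENNReal} {c v : ℝ} (hc : 0 ≤ c)
    (hx : x ≤ ENNReal.ofReal (c * v)) (hy : ENNReal.ofReal v ≤ y) : x ≤ ENNReal.ofReal c * y :=
  calc x ≤ ENNReal.ofReal (c * v) := hx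
    _ = ENNReal.ofReal c * ENNReal.ofReal v := ENNReal.ofReal_mul hc
    _ ≤ ENNReal.ofReal c * y := by gcongr

lemma convexOn_abs_rpow {p : ℝ} (hp : 1 ≤ p) : ConvexOn ℝ univ fun z : ℝ => |z| ^ p := by
  have himg : (fun z : ℝ => |z|) '' univ = Ici 0 :=
    Subset.antisymm (image_subset_iff.2 fun z _ => abs_nonneg z)
      fun x hx => ⟨x, mem_univ x, abs_of_nonneg hx⟩
  refine ConvexOn.comp (g := fun x : ℝ => x ^ p) ?_ convexOn_univ_norm ?_ <;> rw [himg]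
  · exact convexOn_rpow hp
  · exact fun x hx y _ hxy => Real.rpow_le_rpow hx hxy (by linarith)

lemma exists_eq_Ioo_of_isOpen_of_convex {S : Set ℝ} (hopen : IsOpen S) (hconv : Convex ℝ S)
    (hbdd : Bornology.IsBounded S) (hne : S.Nonempty) : ∃ a b : ℝ, a < b ∧ S = Ioo a b := by
  have hsub : S ⊆ Ioo (sInf S) (sSup S) := fun x hx => by
    obtain ⟨δ, hδ, hball⟩ := Metric.isOpen_iff.1 hopen x hx
    rw [Real.ball_eq_Ioo] at hball
    exact ⟨(csInf_le hbdd.bddBelow (hball ⟨by linarith, by linarith⟩ : x - δ / 2 ∈ S)).trans_lt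
        (by linarith),
      (le_csSup hbdd.bddAbove (hball ⟨by linarith, by linarith⟩ : x + δ / 2 ∈ S)).trans_lt'
        (by linarith)⟩
  obtain ⟨x, hx⟩ := hne
  exact ⟨sInf S, sSup S, (hsub hx).1.trans (hsub hx).2, hsub.antisymm
    ((hconv.isConnected ⟨x, hx⟩).Ioo_csInf_csSup_subset hbdd.bddBelow hbdd.bddAbove)⟩

def absPowMeasure (α : ℝ) : Measure ℝ :=
  volume.withDensity fun z => ENNReal.ofReal (|z| ^ α)

lemma muH_eq_absPowMeasure (s : ℝ) : muH s = absPowMeasure (1 / s - 2) := rfl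

section absPowMeasure

variable {α : ℝ}

lemma absPowMeasure_apply (E : Set ℝ) :
    absPowMeasure α E = ∫⁻ z in E, ENNReal.ofReal (|z| ^ α) :=
  withDensity_apply' _ E

lemma absPowMeasure_le_ofReal_mul_volume {E : Set ℝ} {m : ℝ} (h : ∀ z ∈ E, |z| ^ α ≤ m) :
    absPowMeasure α E ≤ ENNReal.ofReal m * volume E := by
  rw [absPowMeasure_apply, ← setLIntegral_const]
  exact setLIntegral_mono measurable_const fun z hz => ENNReal.ofReal_le_ofReal (h z hz)

lemma ofReal_mul_volume_le_absPowMeasure {E : Set ℝ} {m : ℝ}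
    (h : ∀ z ∈ E, z ≠ 0 → m ≤ |z| ^ α) :
    ENNReal.ofReal m * volume E ≤ absPowMeasure α E := by
  rw [absPowMeasure_apply, ← setLIntegral_const]
  refine setLIntegral_mono_ae (by fun_prop) ?_
  filter_upwards [compl_mem_ae_iff.2 (measure_singleton (0 : ℝ))] with z hz hzE
  exact ENNReal.ofReal_le_ofReal (h z hzE hz)

lemma absPowMeasure_preimage_neg (E : Set ℝ) :
    absPowMeasure α (Neg.neg ⁻¹' E) = absPowMeasure α E := by
  rw [absPowMeasure_apply, absPowMeasure_apply,
    ← (Measure.measurePreserving_neg volume).setLIntegral_comp_preimage_emb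
      (Homeomorph.neg ℝ).measurableEmbedding _ E]
  simp only [abs_neg]

lemma absPowMeasure_Ico_zero (hα : -1 < α) {r : ℝ} (hr : 0 ≤ r) :
    absPowMeasure α (Ico 0 r) = ENNReal.ofReal (r ^ (α + 1) / (α + 1)) := by
  have hint : IntegrableOn (fun x : ℝ => x ^ α) (Ioc 0 r) :=
    (intervalIntegrable_iff_integrableOn_Ioc_of_le hr).1
      (intervalIntegral.intervalIntegrable_rpow' hα)
  rw [absPowMeasure_apply, setLIntegral_congr Ico_ae_eq_Ioc,
    setLIntegral_congr_fun measurableSet_Ioc fun x hx => by rw [abs_of_pos hx.1],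
    ← ofReal_integral_eq_lintegral_ofReal hint
      ((ae_restrict_iff' measurableSet_Ioc).2 (.of_forall fun x hx => Real.rpow_nonneg hx.1.le α)),
    ← intervalIntegral.integral_of_le hr, integral_rpow (.inl hα),
    Real.zero_rpow (by linarith), sub_zero]

lemma absPowMeasure_Ioo_neg_le (hα : -1 < α) {r : ℝ} (hr : 0 ≤ r) :
    absPowMeasure α (Ioo (-r) r) ≤ ENNReal.ofReal (2 * (r ^ (α + 1) / (α + 1))) := by
  have hsub : Ioo (-r) r ⊆ Neg.neg ⁻¹' Ico 0 r ∪ Ico 0 r := by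
    intro z hz
    rcases le_or_gt 0 z with h | h
    · exact .inr ⟨h, hz.2⟩
    · exact .inl ⟨by simp only [Left.nonneg_neg_iff]; linarith, by linarith [hz.1]⟩
  have hnonneg : 0 ≤ r ^ (α + 1) / (α + 1) := div_nonneg (Real.rpow_nonneg hr _) (by linarith)
  calc absPowMeasure α (Ioo (-r) r) ≤ absPowMeasure α (Neg.neg ⁻¹' Ico 0 r ∪ Ico 0 r) :=
        measure_mono hsub
    _ ≤ absPowMeasure α (Ico 0 r) + absPowMeasure α (Ico 0 r) := by
        grw [measure_union_le, absPowMeasure_preimage_neg]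
    _ = ENNReal.ofReal (2 * (r ^ (α + 1) / (α + 1))) := by
        rw [absPowMeasure_Ico_zero hα hr, ← ENNReal.ofReal_add hnonneg hnonneg, two_mul]

lemma absPowMeasure_Ioo_ne_top (hα : -1 < α) (a b : ℝ) : absPowMeasure α (Ioo a b) ≠ ⊤ := by
  have hsub : Ioo a b ⊆ Ioo (-max |a| |b|) (max |a| |b|) := fun z hz =>
    ⟨by linarith [hz.1, neg_abs_le a, le_max_left |a| |b|],
      by linarith [hz.2, le_abs_self b, le_max_right |a| |b|]⟩
  exact ne_top_of_le_ne_top ENNReal.ofReal_ne_top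
    ((measure_mono hsub).trans (absPowMeasure_Ioo_neg_le hα (by positivity)))

lemma absPowMeasure_Ioo_ne_zero {a b : ℝ} (hab : a < b) : absPowMeasure α (Ioo a b) ≠ 0 := by
  rw [absPowMeasure, Ne, withDensity_apply_eq_zero' (by fun_prop)]
  have hsub : Ioo a b \ {0} ⊆ {z | ENNReal.ofReal (|z| ^ α) ≠ 0} ∩ Ioo a b :=
    fun z hz => ⟨(ENNReal.ofReal_pos.2 (Real.rpow_pos_of_pos (abs_pos.2 hz.2) α)).ne', hz.1⟩
  refine (measure_mono_null hsub).mt ?_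
  rw [measure_sdiff_null (measure_singleton 0), Real.volume_Ioo]
  simpa using hab

variable {a b t : ℝ} {E : Set ℝ}

lemma absPowMeasure_le_of_nonneg (hα : 0 ≤ α) (hab : a < b) (hE : E ⊆ Ioo a b) (ht : 0 ≤ t)
    (hEt : volume E ≤ ENNReal.ofReal (t * (b - a))) :
    absPowMeasure α E ≤ ENNReal.ofReal (2 * 5 ^ α * t) * absPowMeasure α (Ioo a b) := by
  set L := b - a
  set M := max |a| |b|
  have hL : 0 < L := sub_pos.2 hab
  have hJ : volume (Ioo (-(L / 4)) (L / 4)) = ENNReal.ofReal (L / 2) := by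
    rw [Real.volume_Ioo]; ring_nf
  have hvol : ENNReal.ofReal (L / 2) ≤ volume (Ioo a b \ Ioo (-(L / 4)) (L / 4)) := by
    calc ENNReal.ofReal (L / 2) = volume (Ioo a b) - volume (Ioo (-(L / 4)) (L / 4)) := by
          rw [hJ, Real.volume_Ioo, ← ENNReal.ofReal_sub _ (by positivity)]
          congr 1
          ring
      _ ≤ _ := le_measure_sdiff
  have hlower : ENNReal.ofReal ((M / 5) ^ α * (L / 2)) ≤ absPowMeasure α (Ioo a b) := by
    calc ENNReal.ofReal ((M / 5) ^ α * (L / 2))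
        = ENNReal.ofReal ((M / 5) ^ α) * ENNReal.ofReal (L / 2) :=
          ENNReal.ofReal_mul (by positivity)
      _ ≤ ENNReal.ofReal ((M / 5) ^ α) * volume (Ioo a b \ Ioo (-(L / 4)) (L / 4)) := by gcongr
      _ ≤ absPowMeasure α (Ioo a b \ Ioo (-(L / 4)) (L / 4)) := by
          refine ofReal_mul_volume_le_absPowMeasure fun z hz _ =>
            Real.rpow_le_rpow (by positivity) ?_ hα
          -- `M/5` is a convex combination of the lower bounds `M - L` and `L/4` for `|z|`
          have hML := max_abs_le_abs_add_of_mem_Icc (Ioo_subset_Icc_self hz.1)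
          have hLz : L / 4 ≤ |z| := by
            by_contra! h
            exact hz.2 (abs_lt.1 h)
          linarith
      _ ≤ absPowMeasure α (Ioo a b) := measure_mono sdiff_subset
  refine le_ofReal_mul_of_le_ofReal_mul (by positivity) ?_ hlower
  calc absPowMeasure α E ≤ ENNReal.ofReal (M ^ α) * volume E :=
        absPowMeasure_le_ofReal_mul_volume fun z hz =>
          Real.rpow_le_rpow (abs_nonneg z) (abs_le_max_abs_abs (hE hz).1.le (hE hz).2.le) hα
    _ ≤ ENNReal.ofReal (M ^ α) * ENNReal.ofReal (t * L) := by gcongr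
    _ = ENNReal.ofReal (2 * 5 ^ α * t * ((M / 5) ^ α * (L / 2))) := by
        rw [← ENNReal.ofReal_mul (by positivity), Real.div_rpow (by positivity) (by norm_num)]
        congr 1
        field_simp

lemma ofReal_mul_le_absPowMeasure_Ioo_of_nonpos (hα : α ≤ 0) :
    ENNReal.ofReal (max |a| |b| ^ α * (b - a)) ≤ absPowMeasure α (Ioo a b) := by
  rw [ENNReal.ofReal_mul (Real.rpow_nonneg (by positivity) α), ← Real.volume_Ioo]
  exact ofReal_mul_volume_le_absPowMeasure fun z hz hz0 => Real.rpow_le_rpow_of_nonpos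
    (abs_pos.2 hz0) (abs_le_max_abs_abs hz.1.le hz.2.le) hα

lemma absPowMeasure_le_of_nonpos_of_far (hα : α ≤ 0) (hab : a < b)
    (hfar : 2 * (b - a) ≤ max |a| |b|) (hE : E ⊆ Ioo a b) (ht : 0 ≤ t)
    (hEt : volume E ≤ ENNReal.ofReal (t * (b - a))) :
    absPowMeasure α E ≤ ENNReal.ofReal (2 ^ (-α) * t) * absPowMeasure α (Ioo a b) := by
  set M := max |a| |b|
  have hM : 0 < M := by linarith
  refine le_ofReal_mul_of_le_ofReal_mul (by positivity) ?_
    (ofReal_mul_le_absPowMeasure_Ioo_of_nonpos hα)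
  calc absPowMeasure α E ≤ ENNReal.ofReal ((M / 2) ^ α) * volume E := by
        refine absPowMeasure_le_ofReal_mul_volume fun z hz =>
          Real.rpow_le_rpow_of_nonpos (by positivity) ?_ hα
        linarith [max_abs_le_abs_add_of_mem_Icc (Ioo_subset_Icc_self (hE hz))]
    _ ≤ ENNReal.ofReal ((M / 2) ^ α) * ENNReal.ofReal (t * (b - a)) := by gcongr
    _ = ENNReal.ofReal (2 ^ (-α) * t * (M ^ α * (b - a))) := by
        rw [← ENNReal.ofReal_mul (by positivity), Real.div_rpow hM.le (by norm_num),
          Real.rpow_neg (by norm_num)]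
        congr 1
        field_simp

lemma absPowMeasure_le_of_nonpos_of_near (hα₁ : -1 < α) (hα : α ≤ 0) (hab : a < b)
    (hnear : max |a| |b| ≤ 2 * (b - a)) (ht : 0 < t)
    (hEt : volume E ≤ ENNReal.ofReal (t * (b - a))) :
    absPowMeasure α E ≤
      ENNReal.ofReal ((2 / (α + 1) + 1) * 2 ^ (-α) * t ^ (α + 1)) * absPowMeasure α (Ioo a b) := by
  set L := b - a
  set r := t * L
  have hL : 0 < L := sub_pos.2 hab
  have hr : 0 < r := mul_pos ht hL
  have hα1 : 0 < α + 1 := by linarith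
  have hlower : ENNReal.ofReal ((2 * L) ^ α * L) ≤ absPowMeasure α (Ioo a b) := by
    have hM : 0 < max |a| |b| := by
      linarith [le_abs_self b, neg_abs_le a, le_max_left |a| |b|, le_max_right |a| |b|]
    exact le_trans (ENNReal.ofReal_le_ofReal (mul_le_mul_of_nonneg_right
      (Real.rpow_le_rpow_of_nonpos hM hnear hα) hL.le))
      (ofReal_mul_le_absPowMeasure_Ioo_of_nonpos hα)
  have hfar : absPowMeasure α (E \ Ioo (-r) r) ≤ ENNReal.ofReal (r ^ α * r) := by
    calc absPowMeasure α (E \ Ioo (-r) r) ≤ ENNReal.ofReal (r ^ α) * volume (E \ Ioo (-r) r) := by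
          refine absPowMeasure_le_ofReal_mul_volume fun z hz =>
            Real.rpow_le_rpow_of_nonpos hr ?_ hα
          by_contra! h
          exact hz.2 (abs_lt.1 h)
      _ ≤ ENNReal.ofReal (r ^ α) * ENNReal.ofReal r := by grw [measure_mono sdiff_subset, hEt]
      _ = ENNReal.ofReal (r ^ α * r) := (ENNReal.ofReal_mul (by positivity)).symm
  refine le_ofReal_mul_of_le_ofReal_mul (by positivity) ?_ hlower
  calc absPowMeasure α E ≤ absPowMeasure α (Ioo (-r) r) + absPowMeasure α (E \ Ioo (-r) r) :=
        (measure_le_inter_add_sdiff _ E _).trans (by grw [inter_subset_right])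
    _ ≤ ENNReal.ofReal (2 * (r ^ (α + 1) / (α + 1))) + ENNReal.ofReal (r ^ α * r) := by
        grw [absPowMeasure_Ioo_neg_le hα₁ hr.le, hfar]
    _ = ENNReal.ofReal ((2 / (α + 1) + 1) * 2 ^ (-α) * t ^ (α + 1) * ((2 * L) ^ α * L)) := by
        have hL' : 2 ^ (-α) * ((2 * L) ^ α * L) = L ^ (α + 1) := by
          rw [Real.mul_rpow (by norm_num) hL.le, Real.rpow_neg (by norm_num),
            Real.rpow_add_one hL.ne']
          field_simp
        rw [← ENNReal.ofReal_add (by positivity) (by positivity), ← Real.rpow_add_one hr.ne',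
          Real.mul_rpow ht.le hL.le, ← hL']
        congr 1
        field_simp

lemma exists_absPowMeasure_le_rpow_mul (hα : -1 < α) :
    ∃ C θ : ℝ, 0 < θ ∧ ∀ t ∈ Ioc (0 : ℝ) 1, ∀ a b : ℝ, a < b → ∀ E ⊆ Ioo a b,
      volume E ≤ ENNReal.ofReal (t * (b - a)) →
      absPowMeasure α E ≤ ENNReal.ofReal (C * t ^ θ) * absPowMeasure α (Ioo a b) := by
  rcases le_or_gt 0 α with hα0 | hα0
  · refine ⟨2 * 5 ^ α, 1, one_pos, fun t ht a b hab E hE hEt => ?_⟩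
    rw [Real.rpow_one]
    exact absPowMeasure_le_of_nonneg hα0 hab hE ht.1.le hEt
  refine ⟨(2 / (α + 1) + 1) * 2 ^ (-α), α + 1, by linarith, fun t ht a b hab E hE hEt => ?_⟩
  rcases le_total (max |a| |b|) (2 * (b - a)) with hnear | hfar
  · exact absPowMeasure_le_of_nonpos_of_near hα hα0.le hab hnear ht.1 hEt
  refine (absPowMeasure_le_of_nonpos_of_far hα0.le hab hfar hE ht.1.le hEt).trans
    (mul_le_mul_left (ENNReal.ofReal_le_ofReal ?_) _)
  have hC : 1 ≤ 2 / (α + 1) + 1 := by linarith [div_pos two_pos (by linarith : 0 < α + 1)]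
  have ht' : t ≤ t ^ (α + 1) := by
    simpa using Real.rpow_le_rpow_of_exponent_ge ht.1 ht.2 (by linarith : α + 1 ≤ 1)
  exact mul_le_mul (le_mul_of_one_le_left (by positivity) hC) ht' ht.1.le (by positivity)

theorem absPowMeasure_Ioo_lt_of_volume_lt (hα : -1 < α) {ε : ℝ} (hε : 0 < ε) :
    ∃ ε₀ : ℝ, 0 < ε₀ ∧ ε₀ < 1 ∧ ∀ a b : ℝ, a < b → ∀ E ⊆ Ioo a b,
      volume E < ENNReal.ofReal ε₀ * volume (Ioo a b) →
      absPowMeasure α E < ENNReal.ofReal ε * absPowMeasure α (Ioo a b) := by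
  obtain ⟨C, θ, hθ, hC⟩ := exists_absPowMeasure_le_rpow_mul hα
  have hlim : Tendsto (fun t : ℝ => C * t ^ θ) (𝓝[>] 0) (𝓝 0) := by
    have := ((Real.continuousAt_rpow_const 0 θ (.inr hθ.le)).const_mul C).tendsto
    rw [Real.zero_rpow hθ.ne', mul_zero] at this
    exact this.mono_left nhdsWithin_le_nhds
  obtain ⟨ε₀, hε₀C, hε₀⟩ :=
    ((hlim.eventually (gt_mem_nhds (half_pos hε))).and (Ioo_mem_nhdsGT one_pos)).exists
  refine ⟨ε₀, hε₀.1, hε₀.2, fun a b hab E hE hEvol => ?_⟩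
  rw [Real.volume_Ioo, ← ENNReal.ofReal_mul hε₀.1.le] at hEvol
  calc absPowMeasure α E ≤ ENNReal.ofReal (C * ε₀ ^ θ) * absPowMeasure α (Ioo a b) :=
        hC ε₀ ⟨hε₀.1, hε₀.2.le⟩ a b hab E hE hEvol.le
    _ < ENNReal.ofReal ε * absPowMeasure α (Ioo a b) :=
        ENNReal.mul_lt_mul_left (absPowMeasure_Ioo_ne_zero hab) (absPowMeasure_Ioo_ne_top hα a b)
          ((ENNReal.ofReal_lt_ofReal_iff hε).2 (hε₀C.trans (half_lt_self hε)))

end absPowMeasure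

section deltaH

variable {s : ℝ} (z₀ : ℝ)

lemma continuous_deltaH (hs0 : 0 < s) : Continuous (deltaH s z₀) := by
  have : Continuous fun z : ℝ => |z| ^ (1 / s) :=
    continuous_abs.rpow_const fun _ => .inr (by positivity)
  unfold deltaH hfun
  fun_prop

lemma convexOn_deltaH (hs0 : 0 < s) (hs1 : s ≤ 1) : ConvexOn ℝ univ (deltaH s z₀) := by
  have hh : ConvexOn ℝ univ (hfun s) :=
    (convexOn_abs_rpow ((one_le_div hs0).2 hs1)).smul (div_nonneg (sq_nonneg s) (sub_nonneg.2 hs1))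
  have hℓ : ConcaveOn ℝ univ fun z => hfun s z₀ + hder s z₀ * (z - z₀) :=
    ⟨convex_univ, fun x _ y _ a b _ _ hab => le_of_eq <| by
      simp only [smul_eq_mul]
      linear_combination (hfun s z₀ - hder s z₀ * z₀) * hab⟩
  have hsplit : deltaH s z₀ = hfun s - fun z => hfun s z₀ + hder s z₀ * (z - z₀) := by
    ext z
    simp only [deltaH, Pi.sub_apply]
    ring
  exact hsplit ▸ hh.sub hℓ

lemma tendsto_deltaH_cocompact (hs0 : 0 < s) (hs1 : s < 1) :
    Tendsto (deltaH s z₀) (cocompact ℝ) atTop := by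
  set p := 1 / s
  set c := s ^ 2 / (1 - s)
  set A := |hder s z₀|
  have hp : 1 < p := one_lt_one_div hs0 hs1
  have hc : 0 < c := div_pos (by positivity) (sub_pos.2 hs1)
  have hg : Tendsto (fun x : ℝ => x * (c * x ^ (p - 1) - A) + -(hfun s z₀ + A * |z₀|))
      atTop atTop :=
    tendsto_atTop_add_const_right _ _ (tendsto_id.atTop_mul_atTop₀
      (tendsto_atTop_add_const_right _ _ ((tendsto_rpow_atTop (sub_pos.2 hp)).const_mul_atTop hc)))
  refine tendsto_atTop_mono (fun z => ?_) (hg.comp tendsto_norm_cocompact_atTop)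
  have hpow : ‖z‖ * ‖z‖ ^ (p - 1) = |z| ^ p := by
    rw [Real.norm_eq_abs, ← Real.rpow_one_add' (abs_nonneg z) (by linarith), add_sub_cancel]
  have hlin : hder s z₀ * (z - z₀) ≤ A * (|z| + |z₀|) := by
    calc hder s z₀ * (z - z₀) ≤ A * |z - z₀| := by rw [← abs_mul]; exact le_abs_self _
      _ ≤ A * (|z| + |z₀|) := by gcongr; exact abs_sub _ _
  simp only [Function.comp_apply, deltaH, hfun]
  rw [Real.norm_eq_abs] at hpow ⊢
  nlinarith [hpow]

lemma secH_eq_Ioo (hs0 : 0 < s) (hs1 : s < 1) {R : ℝ} (hR : 0 < R) :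
    ∃ a b : ℝ, a < b ∧ secH s R z₀ = Ioo a b := by
  refine exists_eq_Ioo_of_isOpen_of_convex (isOpen_lt (continuous_deltaH z₀ hs0) continuous_const)
    ?_ ?_ ⟨z₀, by simpa [secH, deltaH] using hR⟩
  · simpa [secH] using (convexOn_deltaH z₀ hs0 hs1.le).convex_lt R
  · rw [Bornology.isBounded_def, Metric.cobounded_eq_cocompact]
    filter_upwards [(tendsto_deltaH_cocompact z₀ hs0 hs1).eventually_ge_atTop R] with z hz
    exact not_lt.2 hz

end deltaH

theorem muH_Ainfty_general (s : ℝ) (hs0 : 0 < s) (hs1 : s < 1)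
    (ε : ℝ) (hε0 : 0 < ε) :
    ∃ ε₀ : ℝ, 0 < ε₀ ∧ ε₀ < 1 ∧
      ∀ (R z₀ : ℝ), 0 < R → ∀ E : Set ℝ, MeasurableSet E → E ⊆ secH s R z₀ →
        volume E < ENNReal.ofReal ε₀ * volume (secH s R z₀) →
        muH s E < ENNReal.ofReal ε * muH s (secH s R z₀) := by
  obtain ⟨ε₀, hε₀, hε₀1, hI⟩ :=
    absPowMeasure_Ioo_lt_of_volume_lt (α := 1 / s - 2) (by linarith [one_lt_one_div hs0 hs1]) hε0
  refine ⟨ε₀, hε₀, hε₀1, fun R z₀ hR E _ hE hEvol => ?_⟩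
  obtain ⟨a, b, hab, hS⟩ := secH_eq_Ioo z₀ hs0 hs1 hR
  rw [hS] at hE hEvol
  rw [hS, muH_eq_absPowMeasure]
  exact hI a b hab E hE hEvol

/-- **Lemma 3.2: `A_∞`-type absolute continuity** of `μ_h` with respect to Lebesgue measure on
sections. -/
theorem muH_Ainfty (s : ℝ) (hs0 : 0 < s) (hs1 : s < 1)
    (ε : ℝ) (hε0 : 0 < ε) (hε1 : ε < 1) :
    ∃ ε₀ : ℝ, 0 < ε₀ ∧ ε₀ < 1 ∧
      ∀ (R z₀ : ℝ), 0 < R → ∀ E : Set ℝ, MeasurableSet E → E ⊆ secH s R z₀ →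
        volume E < ENNReal.ofReal ε₀ * volume (secH s R z₀) →
        muH s E < ENNReal.ofReal ε * muH s (secH s R z₀) :=
  muH_Ainfty_general s hs0 hs1 ε hε0
end
end

section
/- Size of one-dimensional sections (Lemma 3.3): There exist constants C, c > 0, depending only on 0 < s < 1, such that c R ≤ |S_R(z)| · μ_h(S_R(z)) ≤ C R for every z ∈ ℝ and every R > 0, where |S_R(z)| is the Lebesgue measure of the section S_R(z) and μ_h(S_R(z)) = ∫_{S_R(z)} |w|^{1/s−2} dw. -/
open Set Filter Topology MeasureTheory
open scoped RealInnerProductSpace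

noncomputable section

/-!
`δ_h` is the Bregman divergence of `h`. Since `h'` is strictly increasing, the section
`S_R(z)` is an interval `(a, b) ∋ z` with `δ_h(z, a) = δ_h(z, b) = R`, and
`|S_R(z)| · μ_h(S_R(z)) = (b - a)(h'(b) - h'(a))`. The lower bound is convexity:
`R = δ_h(z, b) ≤ (b - z)(h'(b) - h'(z))`.

For the upper bound, `h'` is odd and homogeneous of degree `1/s - 1`, so `μ_h` is doubling:
increments of `h'` over adjacent intervals of equal length are comparable (at unit scale by the
mean value theorem away from the origin and by compactness near it). Splitting at the midpoint,
doubling makes `(y - z)(h'(y) - h'(z))` at most a constant times `δ_h(z, y)`; and it lets the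
longer arm of `(a, b)` control the whole product `(b - a)(h'(b) - h'(a))`.
-/

def bregman (f f' : ℝ → ℝ) (x y : ℝ) : ℝ := f y - f x - f' x * (y - x)

section Bregman

variable {f f' : ℝ → ℝ}

theorem bregman_self (x : ℝ) : bregman f f' x x = 0 := by simp [bregman]

theorem bregman_eq_bregman_add_bregman_add (x m y : ℝ) :
    bregman f f' x y = bregman f f' x m + bregman f f' m y + (f' m - f' x) * (y - m) := by
  simp only [bregman]; ring

theorem bregman_add_bregman_swap (x y : ℝ) :
    bregman f f' x y + bregman f f' y x = (f' y - f' x) * (y - x) := by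
  simp only [bregman]; ring

theorem bregman_comp_neg (x y : ℝ) :
    bregman (fun y => f (-y)) (fun y => -f' (-y)) (-x) (-y) = bregman f f' x y := by
  simp only [bregman, neg_neg]; ring

variable (hf : ∀ x, HasDerivAt f (f' x) x)
include hf

theorem hasDerivAt_bregman (x y : ℝ) : HasDerivAt (bregman f f' x) (f' y - f' x) y := by
  have h := ((hf y).sub_const (f x)).sub (((hasDerivAt_id y).sub_const x).const_mul (f' x))
  rw [mul_one] at h
  exact h

theorem continuous_bregman (x : ℝ) : Continuous (bregman f f' x) :=
  continuous_iff_continuousAt.2 fun y => (hasDerivAt_bregman hf x y).continuousAt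

theorem bregman_nonneg (hmono : Monotone f') (x y : ℝ) : 0 ≤ bregman f f' x y := by
  have hcont : Continuous f := continuous_iff_continuousAt.2 fun z => (hf z).continuousAt
  rcases lt_trichotomy x y with hxy | rfl | hxy
  · obtain ⟨ξ, hξ, hslope⟩ := exists_hasDerivAt_eq_slope f f' hxy
      hcont.continuousOn fun z _ => hf z
    rw [eq_div_iff (sub_ne_zero.2 hxy.ne')] at hslope
    have := hmono hξ.1.le
    simp only [bregman]; nlinarith
  · rw [bregman_self]
  · obtain ⟨ξ, hξ, hslope⟩ := exists_hasDerivAt_eq_slope f f' hxy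
      hcont.continuousOn fun z _ => hf z
    rw [eq_div_iff (sub_ne_zero.2 hxy.ne')] at hslope
    have := hmono hξ.2.le
    simp only [bregman]; nlinarith

theorem sub_mul_sub_le_bregman (hmono : Monotone f') (x m y : ℝ) :
    (f' m - f' x) * (y - m) ≤ bregman f f' x y := by
  rw [bregman_eq_bregman_add_bregman_add x m y]
  linarith [bregman_nonneg hf hmono x m, bregman_nonneg hf hmono m y]

theorem bregman_le_sub_mul_sub (hmono : Monotone f') (x y : ℝ) :
    bregman f f' x y ≤ (f' y - f' x) * (y - x) := by
  linarith [bregman_add_bregman_swap (f := f) (f' := f') x y, bregman_nonneg hf hmono y x]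

theorem exists_bregman_eq_and_lt_iff (hmono : StrictMono f') {R : ℝ} (hR : 0 < R)
    (x : ℝ) :
    ∃ b, x < b ∧ bregman f f' x b = R ∧ ∀ y, x ≤ y → (bregman f f' x y < R ↔ y < b) := by
  have hstrict : StrictMonoOn (bregman f f' x) (Ici x) :=
    strictMonoOn_of_deriv_pos (convex_Ici x) (continuous_bregman hf x).continuousOn
      fun y hy => by
        rw [interior_Ici] at hy
        rw [(hasDerivAt_bregman hf x y).deriv, sub_pos]
        exact hmono hy
  have hd : 0 < f' (x + 1) - f' x := sub_pos.2 (hmono (lt_add_one x))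
  -- past `x + 1` the divergence grows at least with slope `f' (x + 1) - f' x`
  set M := x + 1 + R / (f' (x + 1) - f' x)
  have hM : R ≤ bregman f f' x M := by
    have := sub_mul_sub_le_bregman hf hmono.monotone x (x + 1) M
    rwa [show M - (x + 1) = R / (f' (x + 1) - f' x) by ring,
      mul_div_cancel₀ _ hd.ne'] at this
  obtain ⟨b, hb, hbR⟩ := intermediate_value_Icc (by linarith [div_pos hR hd] : x ≤ M)
    (continuous_bregman hf x).continuousOn
    ⟨(bregman_self (f := f) (f' := f') x).le.trans hR.le, hM⟩
  have hxb : x < b := hb.1.lt_of_ne (by rintro rfl; rw [bregman_self] at hbR; exact hR.ne hbR)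
  exact ⟨b, hxb, hbR, fun y hy => hbR ▸ hstrict.lt_iff_lt hy hb.1⟩

theorem setOf_bregman_lt_eq_Ioo (hmono : StrictMono f') {R : ℝ} (hR : 0 < R) (x : ℝ) :
    ∃ a b, a < x ∧ x < b ∧ bregman f f' x a = R ∧ bregman f f' x b = R ∧
      {y | bregman f f' x y < R} = Ioo a b := by
  obtain ⟨b, hxb, hb, hright⟩ := exists_bregman_eq_and_lt_iff hf hmono hR x
  obtain ⟨a, hxa, ha, hleft⟩ :=
    exists_bregman_eq_and_lt_iff (f := fun y => f (-y)) (f' := fun y => -f' (-y))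
      (fun y => by
        have h := (hf (-y)).comp y (hasDerivAt_neg y)
        rw [mul_neg_one] at h
        exact h)
      (fun u v huv => neg_lt_neg (hmono (neg_lt_neg huv))) hR (-x)
  rw [← neg_neg a, bregman_comp_neg] at ha
  refine ⟨-a, b, by linarith, hxb, ha, hb, Set.ext fun y => ?_⟩
  rcases le_total x y with hxy | hyx
  · rw [mem_ofPred_eq, hright y hxy, mem_Ioo]
    exact ⟨fun h => ⟨by linarith, h⟩, And.right⟩
  · have := hleft (-y) (neg_le_neg hyx)
    rw [bregman_comp_neg] at this
    rw [mem_ofPred_eq, this, mem_Ioo]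
    exact ⟨fun h => ⟨by linarith, by linarith⟩, fun h => by linarith [h.1]⟩

end Bregman

def HasDoublingIncrements (Γ : ℝ) (g : ℝ → ℝ) : Prop :=
  ∀ x h, 0 ≤ h →
    g (x + h) - g x ≤ Γ * (g x - g (x - h)) ∧ g x - g (x - h) ≤ Γ * (g (x + h) - g x)

section Doubling

variable {g : ℝ → ℝ} {Γ : ℝ}

theorem sub_mul_sub_le_max_of_doubling (hmono : Monotone g) (hdbl : HasDoublingIncrements Γ g)
    (hΓ : 0 ≤ Γ) {a z b : ℝ} (haz : a ≤ z) (hzb : z ≤ b) :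
    (b - a) * (g b - g a) ≤
      2 * (1 + Γ) * max ((z - a) * (g z - g a)) ((b - z) * (g b - g z)) := by
  have hza := sub_nonneg.2 (hmono haz)
  have hbz := sub_nonneg.2 (hmono hzb)
  rcases le_total (z - a) (b - z) with harm | harm
  · -- doubling at `z` bounds the increment over the short arm by that over the long one
    have hdz := (hdbl z (z - a) (by linarith)).2
    rw [sub_sub_cancel] at hdz
    have := mul_le_mul_of_nonneg_left
      (sub_le_sub_right (hmono (by linarith : z + (z - a) ≤ b)) (g z)) hΓ
    have hg : g b - g a ≤ (1 + Γ) * (g b - g z) := by linarith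
    calc (b - a) * (g b - g a) ≤ (2 * (b - z)) * ((1 + Γ) * (g b - g z)) :=
          mul_le_mul (by linarith) hg (by linarith) (by linarith)
      _ = 2 * (1 + Γ) * ((b - z) * (g b - g z)) := by ring
      _ ≤ _ := mul_le_mul_of_nonneg_left (le_max_right _ _) (by linarith)
  · have hdz := (hdbl z (b - z) (by linarith)).1
    rw [add_sub_cancel] at hdz
    have := mul_le_mul_of_nonneg_left
      (sub_le_sub_left (hmono (by linarith : a ≤ z - (b - z))) (g z)) hΓ
    have hg : g b - g a ≤ (1 + Γ) * (g z - g a) := by linarith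
    calc (b - a) * (g b - g a) ≤ (2 * (z - a)) * ((1 + Γ) * (g z - g a)) :=
          mul_le_mul (by linarith) hg (by linarith) (by linarith)
      _ = 2 * (1 + Γ) * ((z - a) * (g z - g a)) := by ring
      _ ≤ _ := mul_le_mul_of_nonneg_left (le_max_left _ _) (by linarith)

variable {f : ℝ → ℝ} (hf : ∀ x, HasDerivAt f (g x) x) (hmono : Monotone g)
include hf hmono

theorem sub_mul_sub_le_bregman_of_doubling (hdbl : HasDoublingIncrements Γ g) (hΓ : 0 ≤ Γ)
    (x y : ℝ) : (y - x) * (g y - g x) ≤ 2 * (1 + Γ) * bregman f g x y := by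
  -- doubling at the midpoint bounds the increment of `g` over the far half by that over the
  -- near half
  have hm := mul_le_mul_of_nonneg_left (sub_mul_sub_le_bregman hf hmono x ((x + y) / 2) y)
    (by linarith : 0 ≤ 2 * (1 + Γ))
  rcases le_total x y with hxy | hyx
  · have hd := (hdbl ((x + y) / 2) ((y - x) / 2) (by linarith)).1
    rw [show (x + y) / 2 + (y - x) / 2 = y by ring,
      show (x + y) / 2 - (y - x) / 2 = x by ring] at hd
    have := mul_le_mul_of_nonneg_left hd (by linarith : 0 ≤ (y - x) / 2)
    linarith
  · have hd := (hdbl ((x + y) / 2) ((x - y) / 2) (by linarith)).2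
    rw [show (x + y) / 2 + (x - y) / 2 = x by ring,
      show (x + y) / 2 - (x - y) / 2 = y by ring] at hd
    have := mul_le_mul_of_nonneg_left hd (by linarith : 0 ≤ (x - y) / 2)
    linarith

theorem bregman_le_sub_mul_sub_of_le_of_le {a z b : ℝ} (haz : a ≤ z) (hzb : z ≤ b) :
    bregman f g z b ≤ (b - a) * (g b - g a) :=
  calc bregman f g z b ≤ (g b - g z) * (b - z) := bregman_le_sub_mul_sub hf hmono z b
    _ ≤ (g b - g a) * (b - a) :=
      mul_le_mul (by linarith [hmono haz]) (by linarith) (by linarith)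
        (by linarith [hmono haz, hmono hzb])
    _ = (b - a) * (g b - g a) := mul_comm _ _

theorem sub_mul_sub_le_of_bregman_le (hdbl : HasDoublingIncrements Γ g) (hΓ : 0 ≤ Γ)
    {a z b R : ℝ} (haz : a ≤ z) (hzb : z ≤ b) (ha : bregman f g z a ≤ R)
    (hb : bregman f g z b ≤ R) :
    (b - a) * (g b - g a) ≤ 4 * (1 + Γ) ^ 2 * R := by
  have harm_a := sub_mul_sub_le_bregman_of_doubling hf hmono hdbl hΓ z a
  have harm_b := sub_mul_sub_le_bregman_of_doubling hf hmono hdbl hΓ z b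
  calc (b - a) * (g b - g a)
      ≤ 2 * (1 + Γ) * max ((z - a) * (g z - g a)) ((b - z) * (g b - g z)) :=
        sub_mul_sub_le_max_of_doubling hmono hdbl hΓ haz hzb
    _ ≤ 2 * (1 + Γ) * (2 * (1 + Γ) * R) := by
        gcongr
        exact max_le (by nlinarith) (by nlinarith)
    _ = 4 * (1 + Γ) ^ 2 * R := by ring

end Doubling

theorem hsec_pos {s z : ℝ} (hz : z ≠ 0) : 0 < hsec s z := Real.rpow_pos_of_pos (abs_pos.2 hz) _

section PowerProfile

variable {s : ℝ} (hs0 : 0 < s) (hs1 : s < 1)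
include hs0 hs1

theorem hasDerivAt_hfun (z : ℝ) : HasDerivAt (hfun s) (hder s z) z := by
  have h := (hasDerivAt_abs_rpow z (one_lt_one_div hs0 hs1)).const_mul (s ^ 2 / (1 - s))
  have : 1 - s ≠ 0 := by linarith
  rw [show s ^ 2 / (1 - s) * (1 / s * |z| ^ (1 / s - 2) * z) = hder s z by
    rw [hder]; field_simp] at h
  exact h

theorem continuous_hder : Continuous (hder s) := by
  have hC : ContDiff ℝ 1 (hfun s) :=
    contDiff_const.mul (contDiff_norm_rpow (E := ℝ) (one_lt_one_div hs0 hs1))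
  rw [← funext fun z => (hasDerivAt_hfun hs0 hs1 z).deriv]
  exact hC.continuous_deriv le_rfl

theorem hasDerivAt_hder {z : ℝ} (hz : z ≠ 0) : HasDerivAt (hder s) (hsec s z) z := by
  have h := ((hasDerivAt_id z).mul ((hasDerivAt_abs hz).rpow_const (p := 1 / s - 2)
    (Or.inl (abs_ne_zero.2 hz)))).const_mul (s / (1 - s))
  refine (h.congr_of_eventuallyEq (Eventually.of_forall fun y => ?_)).congr_deriv ?_
  · simp only [hder, Pi.mul_apply, id]; ring
  · have : 1 - s ≠ 0 := by linarith
    have habs : |z| ≠ 0 := abs_ne_zero.2 hz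
    rw [hsec, id, Real.rpow_sub_one habs]
    linear_combination (norm := skip)
      (s / (1 - s) * (1 / s - 2) * |z| ^ (1 / s - 2) / |z|) * self_mul_sign z
    field_simp
    ring

theorem hder_strictMono : StrictMono (hder s) :=
  StrictMonoOn.Iic_union_Ici (a := 0)
    (strictMonoOn_of_deriv_pos (convex_Iic 0) (continuous_hder hs0 hs1).continuousOn
      fun x hx => by
        rw [interior_Iic] at hx
        rw [(hasDerivAt_hder hs0 hs1 (ne_of_lt hx)).deriv]
        exact hsec_pos (ne_of_lt hx))
    (strictMonoOn_of_deriv_pos (convex_Ici 0) (continuous_hder hs0 hs1).continuousOn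
      fun x hx => by
        rw [interior_Ici] at hx
        rw [(hasDerivAt_hder hs0 hs1 (ne_of_gt hx)).deriv]
        exact hsec_pos (ne_of_gt hx))

theorem intervalIntegrable_hsec (a b : ℝ) : IntervalIntegrable (hsec s) volume a b := by
  have h0 : ∀ c, IntervalIntegrable (hsec s) volume c 0 := fun c =>
    intervalIntegral.intervalIntegrable_deriv_of_nonneg (continuous_hder hs0 hs1).continuousOn
      (fun x hx => hasDerivAt_hder hs0 hs1 (by rintro rfl; simp at hx; linarith))
      (fun x _ => Real.rpow_nonneg (abs_nonneg x) _)
  exact (h0 a).trans (h0 b).symm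

theorem integral_hsec (a b : ℝ) : ∫ x in a..b, hsec s x = hder s b - hder s a :=
  integral_eq_of_hasDerivAt_off_countable _ _ (countable_singleton 0)
    (continuous_hder hs0 hs1).continuousOn
    (fun _ hx => hasDerivAt_hder hs0 hs1 hx.2) (intervalIntegrable_hsec hs0 hs1 a b)

theorem muH_Ioo {a b : ℝ} (hab : a ≤ b) :
    muH s (Ioo a b) = ENNReal.ofReal (hder s b - hder s a) := by
  have hmuH : muH s = volume.withDensity fun z => ENNReal.ofReal (hsec s z) := rfl
  rw [hmuH, withDensity_apply _ measurableSet_Ioo, ← ofReal_integral_eq_lintegral_ofReal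
    ((intervalIntegrable_iff_integrableOn_Ioo_of_le hab).1 (intervalIntegrable_hsec hs0 hs1 a b))
    (Eventually.of_forall fun x => Real.rpow_nonneg (abs_nonneg x) _),
    ← integral_Ioc_eq_integral_Ioo, ← intervalIntegral.integral_of_le hab,
    integral_hsec hs0 hs1]

end PowerProfile

theorem rpow_le_rpow_abs_mul_rpow {c u v r : ℝ} (hu : 0 < u) (hv : 0 < v) (huv : u ≤ c * v)
    (hvu : v ≤ c * u) : u ^ r ≤ c ^ |r| * v ^ r := by
  have hc : 0 < c := pos_of_mul_pos_left (hu.trans_le huv) hv.le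
  rcases le_total 0 r with hr | hr
  · rw [abs_of_nonneg hr, ← Real.mul_rpow hc.le hv.le]
    exact Real.rpow_le_rpow hu.le huv hr
  · rw [abs_of_nonpos hr, Real.rpow_neg hc.le, ← div_eq_inv_mul,
      le_div_iff₀ (Real.rpow_pos_of_pos hc r), ← Real.mul_rpow hu.le hc.le]
    exact Real.rpow_le_rpow_of_nonpos hv (by linarith) hr

theorem hder_neg (s z : ℝ) : hder s (-z) = -hder s z := by
  simp only [hder, abs_neg]; ring

theorem hder_mul_left (s : ℝ) {t : ℝ} (ht : 0 < t) (y : ℝ) :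
    hder s (t * y) = t ^ (1 / s - 1) * hder s y := by
  rw [hder, hder, abs_mul, abs_of_pos ht, Real.mul_rpow ht.le (abs_nonneg y),
    show 1 / s - 1 = 1 / s - 2 + 1 by ring, Real.rpow_add_one ht.ne']
  ring

section DoublingHder

variable {s : ℝ} (hs0 : 0 < s) (hs1 : s < 1)
include hs0 hs1

theorem hder_add_one_sub_le_of_two_le_abs {y : ℝ} (hy : 2 ≤ |y|) :
    hder s (y + 1) - hder s y ≤ 3 ^ |1 / s - 2| * (hder s y - hder s (y - 1)) := by
  have hne : ∀ t ∈ Icc (y - 1) (y + 1), t ≠ 0 := by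
    rintro t ⟨h1, h2⟩ rfl
    rcases le_abs'.1 hy with h | h <;> linarith
  -- mean value theorem on both unit steps: `h''` at comparable points
  obtain ⟨ξ, hξ, hξeq⟩ := exists_hasDerivAt_eq_slope (hder s) (hsec s) (lt_add_one y)
    (continuous_hder hs0 hs1).continuousOn
    fun t ht => hasDerivAt_hder hs0 hs1 (hne t ⟨by linarith [ht.1], ht.2.le⟩)
  obtain ⟨η, hη, hηeq⟩ := exists_hasDerivAt_eq_slope (hder s) (hsec s) (sub_one_lt y)
    (continuous_hder hs0 hs1).continuousOn
    fun t ht => hasDerivAt_hder hs0 hs1 (hne t ⟨ht.1.le, by linarith [ht.2]⟩)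
  rw [add_sub_cancel_left, div_one] at hξeq
  rw [sub_sub_cancel, div_one] at hηeq
  have hbounds : |ξ| ≤ 3 * |η| ∧ |η| ≤ 3 * |ξ| := by
    rcases le_abs'.1 hy with h | h
    · rw [abs_of_neg (by linarith [hξ.2]), abs_of_neg (by linarith [hη.2])]
      constructor <;> linarith [hξ.1, hξ.2, hη.1, hη.2]
    · rw [abs_of_pos (by linarith [hξ.1]), abs_of_pos (by linarith [hη.1])]
      constructor <;> linarith [hξ.1, hξ.2, hη.1, hη.2]
  rw [← hξeq, ← hηeq]
  exact rpow_le_rpow_abs_mul_rpow (abs_pos.2 (hne ξ ⟨by linarith [hξ.1], hξ.2.le⟩))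
    (abs_pos.2 (hne η ⟨hη.1.le, by linarith [hη.2]⟩)) hbounds.1 hbounds.2

theorem exists_hder_add_one_sub_le :
    ∃ Γ, 0 ≤ Γ ∧ ∀ y, hder s (y + 1) - hder s y ≤ Γ * (hder s y - hder s (y - 1)) := by
  have hmono := hder_strictMono hs0 hs1
  have hcont : Continuous fun y => hder s y - hder s (y - 1) :=
    (continuous_hder hs0 hs1).sub ((continuous_hder hs0 hs1).comp (continuous_sub_right 1))
  obtain ⟨y₀, -, hmin⟩ := isCompact_Icc.exists_isMinOn
    (nonempty_Icc.2 (by norm_num : (-2 : ℝ) ≤ 2)) hcont.continuousOn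
  have hm : 0 < hder s y₀ - hder s (y₀ - 1) := sub_pos.2 (hmono (sub_one_lt y₀))
  have hM : 0 ≤ hder s 3 - hder s (-2) := sub_nonneg.2 (hmono.monotone (by norm_num))
  refine ⟨max (3 ^ |1 / s - 2|) ((hder s 3 - hder s (-2)) / (hder s y₀ - hder s (y₀ - 1))),
    le_max_of_le_left (by positivity), fun y => ?_⟩
  have hD : 0 ≤ hder s y - hder s (y - 1) := sub_nonneg.2 (hmono.monotone (sub_one_lt y).le)
  by_cases hy : 2 ≤ |y|
  · exact (hder_add_one_sub_le_of_two_le_abs hs0 hs1 hy).trans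
      (mul_le_mul_of_nonneg_right (le_max_left _ _) hD)
  rw [not_le, abs_lt] at hy
  have hmy : hder s y₀ - hder s (y₀ - 1) ≤ hder s y - hder s (y - 1) :=
    isMinOn_iff.1 hmin y ⟨hy.1.le, hy.2.le⟩
  calc hder s (y + 1) - hder s y ≤ hder s 3 - hder s (-2) := by
        linarith [hmono.monotone (show y + 1 ≤ 3 by linarith),
          hmono.monotone (show -2 ≤ y by linarith)]
    _ = (hder s 3 - hder s (-2)) / (hder s y₀ - hder s (y₀ - 1)) *
          (hder s y₀ - hder s (y₀ - 1)) := (div_mul_cancel₀ _ hm.ne').symm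
    _ ≤ (hder s 3 - hder s (-2)) / (hder s y₀ - hder s (y₀ - 1)) *
          (hder s y - hder s (y - 1)) := mul_le_mul_of_nonneg_left hmy (by positivity)
    _ ≤ _ := mul_le_mul_of_nonneg_right (le_max_right _ _) hD

theorem hasDoublingIncrements_hder : ∃ Γ, 0 ≤ Γ ∧ HasDoublingIncrements Γ (hder s) := by
  obtain ⟨Γ, hΓ, hunit⟩ := exists_hder_add_one_sub_le hs0 hs1
  -- `hder` is homogeneous of degree `1/s - 1`, so the unit-step bound holds at every scale
  have hstep : ∀ x h, 0 < h →
      hder s (x + h) - hder s x ≤ Γ * (hder s x - hder s (x - h)) := by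
    intro x h hh
    obtain ⟨y, rfl⟩ : ∃ y, x = h * y := ⟨x / h, by field_simp⟩
    rw [show h * y + h = h * (y + 1) by ring, show h * y - h = h * (y - 1) by ring,
      hder_mul_left s hh, hder_mul_left s hh, hder_mul_left s hh]
    have := mul_le_mul_of_nonneg_left (hunit y) (Real.rpow_nonneg hh.le (1 / s - 1))
    linarith
  refine ⟨Γ, hΓ, fun x h hh => ?_⟩
  rcases hh.eq_or_lt with rfl | hh
  · simp
  refine ⟨hstep x h hh, ?_⟩
  have := hstep (-x) h hh
  rw [show -x + h = -(x - h) by ring, show -x - h = -(x + h) by ring,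
    hder_neg, hder_neg, hder_neg] at this
  linarith

end DoublingHder

/-- **Lemma 3.3: size of one-dimensional sections:** `cR ≤ |S_R(z)|·μ_h(S_R(z)) ≤ CR`. -/
theorem section_size (s : ℝ) (hs0 : 0 < s) (hs1 : s < 1) :
    ∃ c C : ℝ, 0 < c ∧ 0 < C ∧
      ∀ (R z : ℝ), 0 < R →
        c * R ≤ (volume (secH s R z)).toReal * (muH s (secH s R z)).toReal ∧
        (volume (secH s R z)).toReal * (muH s (secH s R z)).toReal ≤ C * R := by
  obtain ⟨Γ, hΓ, hdbl⟩ := hasDoublingIncrements_hder hs0 hs1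
  have hf := hasDerivAt_hfun hs0 hs1
  have hmono := hder_strictMono hs0 hs1
  refine ⟨1, 4 * (1 + Γ) ^ 2, one_pos, by positivity, fun R z hR => ?_⟩
  obtain ⟨a, b, haz, hzb, ha, hb, hS⟩ := setOf_bregman_lt_eq_Ioo hf hmono hR z
  have hab := haz.trans hzb
  rw [show secH s R z = Ioo a b from hS, Real.volume_Ioo, muH_Ioo hs0 hs1 hab.le,
    ENNReal.toReal_ofReal (sub_nonneg.2 hab.le),
    ENNReal.toReal_ofReal (sub_nonneg.2 (hmono hab).le), one_mul]
  exact ⟨hb ▸ bregman_le_sub_mul_sub_of_le_of_le hf hmono.monotone haz.le hzb.le,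
    sub_mul_sub_le_of_bregman_le hf hmono.monotone hdbl hΓ haz.le hzb.le ha.le hb.le⟩
end
end
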